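/- arXiv:2111.13698 — 9 statements merged into one kernel-verified Lean document; each statement's English description precedes it below -/
import Mathlib

section
/- Let K be a field, n ≥ 2, and let A be the n×n nilpotent Jordan block A = Σ_{i=1}^{n-1} e_{i,i+1}. For any scalars a_{i,j} ∈ K with Σ_{i=1}^n a_{i,i} = 0, there exists a matrix B ∈ M_n(K) such that [A,B] = Σ_{i=1}^n a_{i,i} e_{i,i} + Σ_{i=1}^{n-1} a_{i,i+1} e_{i,i+1}. -/
open Matrix

/-- The nilpotent Jordan block `A = ∑_{i=1}^{n-1} e_{i,i+1}`. -/
def jordanBlock (K : Type*) [Field K] (n : ℕ) : Matrix (Fin n) (Fin n) K :=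
  Matrix.of fun i j => if (j : ℕ) = (i : ℕ) + 1 then (1 : K) else 0

/-- The upper bidiagonal matrix `∑_i a_{i,i} e_{i,i} + ∑_i a_{i,i+1} e_{i,i+1}`. -/
def upperBidiag {K : Type*} [Field K] {n : ℕ} (a : Fin n → Fin n → K) :
    Matrix (Fin n) (Fin n) K :=
  Matrix.of fun i j =>
    if j = i then a i i else if (j : ℕ) = (i : ℕ) + 1 then a i j else 0

/-
Write `A` for the Jordan block, so that `(A * B) i j = B (i + 1) j` and `(B * A) i j = B i (j - 1)`.
Commuting `A` with `diagonal v` gives the superdiagonal matrix with entries `v (i + 1) - v i`;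
commuting it with the subdiagonal matrix carrying `C (i + 1)` at `(i + 1, i)` gives
`diagonal (C (i + 1) - C i)`, provided `C 0 = 0 = C n`. Taking `v` and `C` to be prefix sums of the
prescribed superdiagonal and diagonal entries solves the equation, and `C n = 0` is exactly the
trace condition.
-/

lemma Matrix.mul_diagonal_sub_diagonal_mul_apply {ι R : Type*} [Fintype ι] [DecidableEq ι]
    [CommRing R] (M : Matrix ι ι R) (v : ι → R) (i j : ι) :
    (M * diagonal v - diagonal v * M) i j = M i j * (v j - v i) := by
  rw [Matrix.sub_apply, mul_diagonal, diagonal_mul, mul_sub, mul_comm (v i)]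

section JordanBlock

variable {K : Type*} [Field K]

def subdiagonal (n : ℕ) (C : ℕ → K) : Matrix (Fin n) (Fin n) K :=
  of fun p q => if (p : ℕ) = q + 1 then C p else 0

lemma jordanBlock_mul_subdiagonal_apply {n : ℕ} (C : ℕ → K) (hC : C n = 0) (i j : Fin n) :
    (jordanBlock K n * subdiagonal n C) i j = if i = j then C (i + 1) else 0 := by
  simp only [mul_apply, jordanBlock, subdiagonal, of_apply, ite_mul, one_mul, zero_mul]
  rw [Fin.sum_univ_eq_sum_range (fun k => if k = i + 1 then if k = j + 1 then C k else 0 else 0),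
    Finset.sum_ite_eq']
  rcases eq_or_ne i j with rfl | hij
  · obtain h | h : (i : ℕ) + 1 < n ∨ (i : ℕ) + 1 = n := by omega
    all_goals simp [h, hC]
  · simp [hij, Fin.val_inj]

lemma subdiagonal_mul_jordanBlock_apply {n : ℕ} (C : ℕ → K) (hC : C 0 = 0) (i j : Fin n) :
    (subdiagonal n C * jordanBlock K n) i j = if i = j then C i else 0 := by
  simp only [mul_apply, jordanBlock, subdiagonal, of_apply, mul_ite, mul_one, mul_zero]
  rw [Fin.sum_univ_eq_sum_range
    (fun k => if (j : ℕ) = k + 1 then if (i : ℕ) = k + 1 then C i else 0 else 0)]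
  obtain ⟨_ | m, hm⟩ := j
  · simp_all [Fin.ext_iff]
  · simp only [add_left_inj]
    rw [Finset.sum_ite_eq, if_pos (Finset.mem_range.2 (by omega))]
    simp [Fin.ext_iff]

lemma jordanBlock_mul_subdiagonal_sub {n : ℕ} (C : ℕ → K) (h₀ : C 0 = 0) (hₙ : C n = 0) :
    jordanBlock K n * subdiagonal n C - subdiagonal n C * jordanBlock K n =
      diagonal fun i : Fin n => C (i + 1) - C i := by
  ext i j
  rw [Matrix.sub_apply, jordanBlock_mul_subdiagonal_apply C hₙ,
    subdiagonal_mul_jordanBlock_apply C h₀, diagonal_apply]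
  split_ifs <;> simp

lemma jordanBlock_mul_diagonal_sub {n : ℕ} (v : ℕ → K) :
    jordanBlock K n * diagonal (fun i : Fin n => v i) -
        diagonal (fun i : Fin n => v i) * jordanBlock K n =
      of fun i j : Fin n => if (j : ℕ) = i + 1 then v (i + 1) - v i else 0 := by
  ext i j
  rw [Matrix.mul_diagonal_sub_diagonal_mul_apply, jordanBlock, of_apply, of_apply]
  split_ifs with h <;> simp [h]

end JordanBlock

lemma upperBidiag_eq_diagonal_add {K : Type*} [Field K] {n : ℕ} (a : Fin n → Fin n → K) :
    upperBidiag a =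
      diagonal (fun i => a i i) + of fun i j : Fin n => if (j : ℕ) = i + 1 then a i j else 0 := by
  ext i j
  rw [upperBidiag, Matrix.add_apply, diagonal_apply, of_apply, of_apply]
  rcases eq_or_ne j i with rfl | hji
  · simp
  · simp [hji, Ne.symm hji]

theorem stmt_0_general (K : Type*) [Field K] (n : ℕ)
    (a : Fin n → Fin n → K) (ha : ∑ i, a i i = 0) :
    ∃ B : Matrix (Fin n) (Fin n) K,
      jordanBlock K n * B - B * jordanBlock K n = upperBidiag a := by
  set d : ℕ → K := fun k => if h : k < n then a ⟨k, h⟩ ⟨k, h⟩ else 0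
  set s : ℕ → K := fun k => if h : k + 1 < n then a ⟨k, by omega⟩ ⟨k + 1, h⟩ else 0
  set C : ℕ → K := fun p => ∑ k ∈ Finset.range p, d k
  set S : ℕ → K := fun p => ∑ k ∈ Finset.range p, s k
  have hC : C n = 0 := by
    change ∑ k ∈ Finset.range n, d k = 0
    rw [← ha, ← Fin.sum_univ_eq_sum_range]
    simp [d]
  refine ⟨subdiagonal n C + diagonal fun i : Fin n => S i, ?_⟩
  rw [mul_add, add_mul, add_sub_add_comm,
    jordanBlock_mul_subdiagonal_sub C (Finset.sum_range_zero d) hC, jordanBlock_mul_diagonal_sub,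
    upperBidiag_eq_diagonal_add]
  congr 1
  · congr 1 with i
    simp [C, Finset.sum_range_succ_sub_sum, d]
  · ext i j
    simp only [of_apply, S, Finset.sum_range_succ_sub_sum]
    split_ifs with h
    · simp [s, ← h]
    · rfl

theorem stmt_0 (K : Type*) [Field K] (n : ℕ) (hn : 2 ≤ n)
    (a : Fin n → Fin n → K) (ha : ∑ i, a i i = 0) :
    ∃ B : Matrix (Fin n) (Fin n) K,
      jordanBlock K n * B - B * jordanBlock K n = upperBidiag a :=
  stmt_0_general K n a ha
end

section
/- Let K be a field of characteristic zero, n ≥ 3, and let a_{i,j} ∈ K be scalars with Σ_{i=1}^n a_{i,i} = 0. Then there exist matrices A, B, C ∈ M_n(K) such that [A,[[A,B],[A,C]]] = Σ_{i=1}^n a_{i,i} e_{i,i} + Σ_{i=1}^{n-1} a_{i,i+1} e_{i,i+1}. -/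
open Matrix

namespace Stmt2Aux

open Finset

variable {K : Type*} [Field K] {n : ℕ}

def dseq (a : Fin n → Fin n → K) (k : ℕ) : K :=
  if h : k < n then a ⟨k, h⟩ ⟨k, h⟩ else 0

def gseq (a : Fin n → Fin n → K) (k : ℕ) : K :=
  if h : k + 1 < n then a ⟨k, by omega⟩ ⟨k + 1, h⟩ else 0

def sseq (a : Fin n → Fin n → K) (i : ℕ) : K := ∑ k ∈ range (i + 1), dseq a k

def tseq (a : Fin n → Fin n → K) (i : ℕ) : K := ∑ k ∈ range i, gseq a k

def cc (a : Fin n → Fin n → K) : K := -(∑ k ∈ range n, tseq a k) / n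

def tauseq (a : Fin n → Fin n → K) (i : ℕ) : K :=
  ∑ k ∈ range (i + 1), (tseq a k + cc a)

def pseq (K : Type*) [Field K] (n i : ℕ) : K := if i + 2 < n then 1 else 2 - (n : K)

def epsseq (a : Fin n → Fin n → K) (i : ℕ) : K := sseq a i / pseq K n i

def eseq (a : Fin n → Fin n → K) (i : ℕ) : K :=
  (∑ m ∈ range n, ∑ k ∈ range m, epsseq a k) / n - ∑ k ∈ range i, epsseq a k

def vseq (a : Fin n → Fin n → K) (i : ℕ) : K := -tauseq a i / pseq K n i

lemma dseq_at (a : Fin n → Fin n → K) (i : Fin n) : dseq a (i : ℕ) = a i i := by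
  simp [dseq, i.isLt]

lemma gseq_at (a : Fin n → Fin n → K) (i j : Fin n) (h : (j : ℕ) = (i : ℕ) + 1) :
    gseq a (i : ℕ) = a i j := by
  have hj := j.isLt
  unfold gseq
  rw [dif_pos (show (i : ℕ) + 1 < n by omega)]
  exact congrArg₂ a (Fin.ext rfl) (Fin.ext h.symm)

lemma pseq_ne_zero [CharZero K] (hn : 3 ≤ n) (i : ℕ) : pseq K n i ≠ 0 := by
  unfold pseq
  split_ifs with h
  · exact one_ne_zero
  · have h2 : (n : K) ≠ 2 := by
      exact_mod_cast (by omega : n ≠ 2)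
    intro hc
    exact h2 (by linear_combination -hc)

lemma peps [CharZero K] (hn : 3 ≤ n) (a : Fin n → Fin n → K) (i : ℕ) :
    pseq K n i * epsseq a i = sseq a i := by
  unfold epsseq
  rw [mul_comm, div_mul_cancel₀ _ (pseq_ne_zero hn i)]

lemma pv [CharZero K] (hn : 3 ≤ n) (a : Fin n → Fin n → K) (i : ℕ) :
    pseq K n i * vseq a i = -tauseq a i := by
  unfold vseq
  rw [mul_comm, div_mul_cancel₀ _ (pseq_ne_zero hn i)]

lemma psum_top [CharZero K] (hn : 3 ≤ n) :
    ∑ k ∈ range (n - 1), pseq K n k = 0 := by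
  rw [show n - 1 = (n - 2) + 1 by omega, sum_range_succ]
  have h1 : ∑ k ∈ range (n - 2), pseq K n k = ((n - 2 : ℕ) : K) := by
    rw [Finset.sum_congr rfl (fun k hk => ?_), sum_const, card_range, nsmul_eq_mul, mul_one]
    have := Finset.mem_range.mp hk
    unfold pseq
    rw [if_pos (by omega)]
  have h2 : pseq K n (n - 2) = 2 - (n : K) := by
    unfold pseq
    rw [if_neg (by omega)]
  rw [h1, h2]
  have h3 : ((n - 2 : ℕ) : K) = (n : K) - 2 := by
    push_cast [Nat.cast_sub (show 2 ≤ n by omega)]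
    ring
  rw [h3]; ring

lemma eseq_sub (a : Fin n → Fin n → K) (i : ℕ) :
    eseq a i - eseq a (i + 1) = epsseq a i := by
  unfold eseq
  rw [sum_range_succ]
  ring

lemma esum_top [CharZero K] (hn : 3 ≤ n) (a : Fin n → Fin n → K) :
    ∑ m ∈ range n, eseq a m = 0 := by
  unfold eseq
  rw [Finset.sum_sub_distrib, sum_const, card_range, nsmul_eq_mul]
  have hn0 : (n : K) ≠ 0 := Nat.cast_ne_zero.mpr (by omega)
  field_simp
  ring

lemma tau_top [CharZero K] (hn : 3 ≤ n) (a : Fin n → Fin n → K) :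
    tauseq a (n - 1) = 0 := by
  unfold tauseq
  rw [show n - 1 + 1 = n by omega, Finset.sum_add_distrib, sum_const, card_range,
    nsmul_eq_mul]
  unfold cc
  have hn0 : (n : K) ≠ 0 := Nat.cast_ne_zero.mpr (by omega)
  field_simp
  ring

lemma s_top (hn : 3 ≤ n) (a : Fin n → Fin n → K) (ha : ∑ i, a i i = 0) :
    sseq a (n - 1) = 0 := by
  unfold sseq
  rw [show n - 1 + 1 = n by omega]
  have h1 : ∑ k ∈ range n, dseq a k = ∑ i : Fin n, a i i := by
    rw [← Fin.sum_univ_eq_sum_range (fun k => dseq a k) n]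
    refine Finset.sum_congr rfl (fun i _ => ?_)
    exact dseq_at a i
  rw [h1, ha]

def Afun (K : Type*) [Field K] (n : ℕ) (i j : ℕ) : K :=
  if j = i + 1 ∧ j < n then 1 else 0

def Pfun (K : Type*) [Field K] (n : ℕ) (i j : ℕ) : K :=
  if i = j + 1 ∧ i < n then pseq K n j else 0

def Qfun (a : Fin n → Fin n → K) (i j : ℕ) : K :=
  if i = j ∧ i < n then eseq a i else if j = i + 1 ∧ j < n then vseq a i else 0

def Bfun (K : Type*) [Field K] (n : ℕ) (i j : ℕ) : K :=
  if i = j + 2 ∧ i < n then ∑ k ∈ range (j + 1), pseq K n k else 0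

def Cfun (a : Fin n → Fin n → K) (i j : ℕ) : K :=
  if i = j + 1 ∧ i < n then ∑ k ∈ range (j + 1), eseq a k
  else if i = j ∧ i < n then ∑ k ∈ range i, vseq a k else 0

def Mfun (a : Fin n → Fin n → K) (i j : ℕ) : K :=
  if i = j + 1 ∧ i < n then sseq a j
  else if i = j ∧ i < n then tseq a i + cc a else 0

def Amat (K : Type*) [Field K] (n : ℕ) : Matrix (Fin n) (Fin n) K :=
  of fun i j => Afun K n (i : ℕ) (j : ℕ)

def Pmat (K : Type*) [Field K] (n : ℕ) : Matrix (Fin n) (Fin n) K :=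
  of fun i j => Pfun K n (i : ℕ) (j : ℕ)

def Qmat (a : Fin n → Fin n → K) : Matrix (Fin n) (Fin n) K :=
  of fun i j => Qfun a (i : ℕ) (j : ℕ)

def Bmat (K : Type*) [Field K] (n : ℕ) : Matrix (Fin n) (Fin n) K :=
  of fun i j => Bfun K n (i : ℕ) (j : ℕ)

def Cmat (a : Fin n → Fin n → K) : Matrix (Fin n) (Fin n) K :=
  of fun i j => Cfun a (i : ℕ) (j : ℕ)

def Mmat (a : Fin n → Fin n → K) : Matrix (Fin n) (Fin n) K :=
  of fun i j => Mfun a (i : ℕ) (j : ℕ)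

lemma fin_sum_ite (m : ℕ) (f : Fin n → K) :
    (∑ k : Fin n, if (k : ℕ) = m then f k else 0) = if h : m < n then f ⟨m, h⟩ else 0 := by
  split_ifs with h
  · rw [Finset.sum_eq_single (⟨m, h⟩ : Fin n)]
    · simp
    · intro b _ hb
      rw [if_neg]
      intro hbm
      exact hb (Fin.ext hbm)
    · intro hmem
      exact absurd (Finset.mem_univ _) hmem
  · apply Finset.sum_eq_zero
    intro k _
    rw [if_neg]
    intro hk
    exact h (hk ▸ k.isLt)

lemma fin_sum_ite' (m : ℕ) (f : Fin n → K) :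
    (∑ k : Fin n, if m = (k : ℕ) + 1 then f k else 0)
      = if h : m - 1 < n ∧ m ≠ 0 then f ⟨m - 1, h.1⟩ else 0 := by
  cases m with
  | zero => simp
  | succ m' =>
    have h1 : (∑ k : Fin n, if m' + 1 = (k : ℕ) + 1 then f k else 0)
        = ∑ k : Fin n, if (k : ℕ) = m' then f k else 0 := by
      refine Finset.sum_congr rfl (fun k _ => ?_)
      refine if_congr ?_ rfl rfl
      omega
    rw [h1, fin_sum_ite]
    split_ifs with hA hB hB
    · rfl
    · exact absurd ⟨by omega, by omega⟩ hB
    · exact absurd hB.1 (by omega)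
    · rfl

lemma A_mul (F : ℕ → ℕ → K) (hF : ∀ i j, n ≤ i → F i j = 0) (i j : Fin n) :
    (Amat K n * of (fun i j : Fin n => F (i : ℕ) (j : ℕ))) i j = F ((i : ℕ) + 1) (j : ℕ) := by
  rw [mul_apply]
  have h1 : ∀ k : Fin n, Amat K n i k * (of (fun i j : Fin n => F (i : ℕ) (j : ℕ))) k j
      = if (k : ℕ) = (i : ℕ) + 1 then F (k : ℕ) (j : ℕ) else 0 := by
    intro k
    simp only [Amat, of_apply, Afun]
    have hk := k.isLt
    by_cases h : (k : ℕ) = (i : ℕ) + 1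
    · rw [if_pos (show (k : ℕ) = (i : ℕ) + 1 ∧ (k : ℕ) < n from ⟨h, by omega⟩),
        if_pos h, one_mul]
    · rw [if_neg (show ¬((k : ℕ) = (i : ℕ) + 1 ∧ (k : ℕ) < n) by omega), if_neg h, zero_mul]
  rw [Finset.sum_congr rfl (fun k _ => h1 k), fin_sum_ite]
  split_ifs with h
  · rfl
  · rw [hF _ _ (by omega)]

lemma mul_A (F : ℕ → ℕ → K) (i j : Fin n) :
    (of (fun i j : Fin n => F (i : ℕ) (j : ℕ)) * Amat K n) i j
      = if (j : ℕ) = 0 then 0 else F (i : ℕ) ((j : ℕ) - 1) := by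
  rw [mul_apply]
  have h1 : ∀ k : Fin n, (of (fun i j : Fin n => F (i : ℕ) (j : ℕ))) i k * Amat K n k j
      = if (j : ℕ) = (k : ℕ) + 1 then F (i : ℕ) (k : ℕ) else 0 := by
    intro k
    simp only [Amat, of_apply, Afun]
    have hj := j.isLt
    by_cases h : (j : ℕ) = (k : ℕ) + 1
    · rw [if_pos (show (j : ℕ) = (k : ℕ) + 1 ∧ (j : ℕ) < n from ⟨h, by omega⟩), if_pos h,
        mul_one]
    · rw [if_neg (show ¬((j : ℕ) = (k : ℕ) + 1 ∧ (j : ℕ) < n) by omega), if_neg h, mul_zero]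
  rw [Finset.sum_congr rfl (fun k _ => h1 k), fin_sum_ite']
  have hj := j.isLt
  split_ifs with hA hB hB
  · exact absurd hA.2 (by omega)
  · rfl
  · rfl
  · exact absurd ⟨by omega, hB⟩ hA

lemma P_mul (F : ℕ → ℕ → K) (i j : Fin n) :
    (Pmat K n * of (fun i j : Fin n => F (i : ℕ) (j : ℕ))) i j
      = if (i : ℕ) = 0 then 0 else pseq K n ((i : ℕ) - 1) * F ((i : ℕ) - 1) (j : ℕ) := by
  rw [mul_apply]
  have h1 : ∀ k : Fin n, Pmat K n i k * (of (fun i j : Fin n => F (i : ℕ) (j : ℕ))) k j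
      = if (i : ℕ) = (k : ℕ) + 1 then pseq K n (k : ℕ) * F (k : ℕ) (j : ℕ) else 0 := by
    intro k
    simp only [Pmat, of_apply, Pfun]
    have hi := i.isLt
    by_cases h : (i : ℕ) = (k : ℕ) + 1
    · rw [if_pos (show (i : ℕ) = (k : ℕ) + 1 ∧ (i : ℕ) < n from ⟨h, by omega⟩), if_pos h]
    · rw [if_neg (show ¬((i : ℕ) = (k : ℕ) + 1 ∧ (i : ℕ) < n) by omega), if_neg h, zero_mul]
  rw [Finset.sum_congr rfl (fun k _ => h1 k), fin_sum_ite']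
  have hi := i.isLt
  split_ifs with hA hB hB
  · exact absurd hA.2 (by omega)
  · rfl
  · rfl
  · exact absurd ⟨by omega, hB⟩ hA

lemma mul_P (F : ℕ → ℕ → K) (hF : ∀ i j, n ≤ j → F i j = 0) (i j : Fin n) :
    (of (fun i j : Fin n => F (i : ℕ) (j : ℕ)) * Pmat K n) i j
      = F (i : ℕ) ((j : ℕ) + 1) * pseq K n (j : ℕ) := by
  rw [mul_apply]
  have h1 : ∀ k : Fin n, (of (fun i j : Fin n => F (i : ℕ) (j : ℕ))) i k * Pmat K n k j
      = if (k : ℕ) = (j : ℕ) + 1 then F (i : ℕ) (k : ℕ) * pseq K n (j : ℕ) else 0 := by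
    intro k
    simp only [Pmat, of_apply, Pfun]
    have hk := k.isLt
    by_cases h : (k : ℕ) = (j : ℕ) + 1
    · rw [if_pos (show (k : ℕ) = (j : ℕ) + 1 ∧ (k : ℕ) < n from ⟨h, by omega⟩), if_pos h]
    · rw [if_neg (show ¬((k : ℕ) = (j : ℕ) + 1 ∧ (k : ℕ) < n) by omega), if_neg h, mul_zero]
  rw [Finset.sum_congr rfl (fun k _ => h1 k), fin_sum_ite]
  split_ifs with h
  · rfl
  · rw [hF _ _ (by omega), zero_mul]

lemma Bfun_top (i j : ℕ) (h : n ≤ i) : Bfun K n i j = 0 := by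
  unfold Bfun; rw [if_neg (by omega)]

lemma Cfun_top (a : Fin n → Fin n → K) (i j : ℕ) (h : n ≤ i) : Cfun a i j = 0 := by
  unfold Cfun; rw [if_neg (by omega), if_neg (by omega)]

lemma Mfun_top (a : Fin n → Fin n → K) (i j : ℕ) (h : n ≤ i) : Mfun a i j = 0 := by
  unfold Mfun; rw [if_neg (by omega), if_neg (by omega)]

lemma Qfun_right (a : Fin n → Fin n → K) (i j : ℕ) (h : n ≤ j) : Qfun a i j = 0 := by
  unfold Qfun; rw [if_neg (by omega), if_neg (by omega)]

lemma L1 [CharZero K] (hn : 3 ≤ n) :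
    Amat K n * Bmat K n - Bmat K n * Amat K n = Pmat K n := by
  ext i j
  have hi := i.isLt
  have hj := j.isLt
  rw [Matrix.sub_apply]
  show (Amat K n * of (fun i j : Fin n => Bfun K n (i : ℕ) (j : ℕ))) i j
      - (of (fun i j : Fin n => Bfun K n (i : ℕ) (j : ℕ)) * Amat K n) i j = _
  rw [A_mul (Bfun K n) (fun i j h => Bfun_top i j h) i j, mul_A (Bfun K n) i j]
  show _ = Pfun K n (i : ℕ) (j : ℕ)
  unfold Bfun Pfun
  split_ifs <;> try (exfalso; omega)
  · rw [show (j : ℕ) + 1 = 1 by omega, sum_range_one, sub_zero]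
    congr 1
    omega
  · rw [sum_range_succ, show (j : ℕ) - 1 + 1 = (j : ℕ) by omega]
    ring
  · ring
  · have e1 := psum_top (K := K) hn
    have e2 : ∑ k ∈ range ((n-2)+1), pseq K n k
        = ∑ k ∈ range (n-2), pseq K n k + pseq K n (n-2) := sum_range_succ _ _
    rw [show (n-2)+1 = n-1 by omega] at e2
    rw [show (j : ℕ) - 1 + 1 = n - 2 by omega, show (j : ℕ) = n - 2 by omega]
    linear_combination e2 - e1
  · ring
  

lemma L2 [CharZero K] (hn : 3 ≤ n) (a : Fin n → Fin n → K) :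
    Amat K n * Cmat a - Cmat a * Amat K n = Qmat a := by
  ext i j
  have hi := i.isLt
  have hj := j.isLt
  rw [Matrix.sub_apply]
  show (Amat K n * of (fun i j : Fin n => Cfun a (i : ℕ) (j : ℕ))) i j
      - (of (fun i j : Fin n => Cfun a (i : ℕ) (j : ℕ)) * Amat K n) i j = _
  rw [A_mul (Cfun a) (fun i j h => Cfun_top a i j h) i j, mul_A (Cfun a) i j]
  show _ = Qfun a (i : ℕ) (j : ℕ)
  unfold Cfun Qfun
  split_ifs <;> try (exfalso; omega)
  · rw [show (j : ℕ) + 1 = 1 by omega, sum_range_one, sub_zero]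
    congr 1
    omega
  · rw [sum_range_succ, show (j : ℕ) - 1 + 1 = (j : ℕ) by omega,
      show (j : ℕ) = (i : ℕ) by omega]
    ring
  · rw [sum_range_succ]
    ring
  · ring
  · have e1 := esum_top hn a
    have e2 : ∑ m ∈ range ((n-1)+1), eseq a m
        = ∑ m ∈ range (n-1), eseq a m + eseq a (n-1) := sum_range_succ _ _
    rw [show (n-1)+1 = n by omega] at e2
    rw [show (j : ℕ) - 1 + 1 = n - 1 by omega, show (i : ℕ) = n - 1 by omega]
    linear_combination e2 - e1
  · ring
  

lemma L3 [CharZero K] (hn : 3 ≤ n) (a : Fin n → Fin n → K) :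
    Pmat K n * Qmat a - Qmat a * Pmat K n = Mmat a := by
  ext i j
  have hi := i.isLt
  have hj := j.isLt
  rw [Matrix.sub_apply]
  show (Pmat K n * of (fun i j : Fin n => Qfun a (i : ℕ) (j : ℕ))) i j
      - (of (fun i j : Fin n => Qfun a (i : ℕ) (j : ℕ)) * Pmat K n) i j = _
  rw [P_mul (Qfun a) i j, mul_P (Qfun a) (fun i j h => Qfun_right a i j h) i j]
  show _ = Mfun a (i : ℕ) (j : ℕ)
  unfold Qfun Mfun
  split_ifs <;> try (exfalso; omega)
  · -- i = 0 diagonal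
    have e2 := pv hn a (0 : ℕ)
    have e3 : tauseq a 0 = tseq a 0 + cc a := by simp [tauseq]
    rw [show (j : ℕ) = 0 by omega, show (i : ℕ) = 0 by omega]
    linear_combination e3 - e2
  · ring
  · -- subdiagonal
    rw [show (i : ℕ) - 1 = (j : ℕ) by omega, show (i : ℕ) = (j : ℕ) + 1 by omega]
    have e1 := eseq_sub a (j : ℕ)
    have e2 := peps hn a (j : ℕ)
    linear_combination pseq K n (j : ℕ) * e1 + e2
  · -- middle diagonal
    rw [show (j : ℕ) = (i : ℕ) by omega]
    have e1 := pv hn a ((i : ℕ) - 1)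
    have e2 := pv hn a (i : ℕ)
    have e3 : tauseq a (i : ℕ) = tauseq a ((i : ℕ) - 1) + (tseq a (i : ℕ) + cc a) := by
      unfold tauseq
      rw [show (i : ℕ) + 1 = ((i : ℕ) - 1 + 1) + 1 by omega, sum_range_succ,
        show (i : ℕ) - 1 + 1 = (i : ℕ) by omega]
    linear_combination e1 - e2 + e3
  · -- top diagonal
    rw [show (i : ℕ) - 1 = n - 2 by omega, show (i : ℕ) = n - 1 by omega]
    have e1 := pv hn a (n - 2)
    have h2 := tau_top hn a
    have e3 : tauseq a (n - 1) = tauseq a (n - 2) + (tseq a (n - 1) + cc a) := by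
      unfold tauseq
      rw [show (n - 1) + 1 = ((n - 2) + 1) + 1 by omega, sum_range_succ,
        show (n - 2) + 1 = n - 1 by omega]
    linear_combination e1 + e3 - h2
  · ring
  

lemma L4 [CharZero K] (hn : 3 ≤ n) (a : Fin n → Fin n → K) (ha : ∑ i, a i i = 0) :
    Amat K n * Mmat a - Mmat a * Amat K n = upperBidiag a := by
  ext i j
  have hi := i.isLt
  have hj := j.isLt
  rw [Matrix.sub_apply]
  show (Amat K n * of (fun i j : Fin n => Mfun a (i : ℕ) (j : ℕ))) i j
      - (of (fun i j : Fin n => Mfun a (i : ℕ) (j : ℕ)) * Amat K n) i j = _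
  rw [A_mul (Mfun a) (fun i j h => Mfun_top a i j h) i j, mul_A (Mfun a) i j]
  show _ = (if j = i then a i i else if (j : ℕ) = (i : ℕ) + 1 then a i j else 0)
  unfold Mfun
  by_cases hd : (j : ℕ) = (i : ℕ)
  · rw [if_pos (Fin.ext hd : j = i)]
    split_ifs <;> try (exfalso; omega)
    · -- i = 0
      have e1 : sseq a (j : ℕ) = dseq a (i : ℕ) := by
        unfold sseq
        rw [show (j : ℕ) + 1 = 1 by omega, sum_range_one]
        congr 1
        omega
      rw [sub_zero, e1, dseq_at]
    · -- middle
      have e2 : sseq a (j : ℕ) = sseq a ((j : ℕ) - 1) + dseq a (j : ℕ) := by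
        unfold sseq
        rw [show (j : ℕ) + 1 = ((j : ℕ) - 1 + 1) + 1 by omega, sum_range_succ,
          show (j : ℕ) - 1 + 1 = (j : ℕ) by omega]
      have e3 : dseq a (j : ℕ) = a i i := by
        rw [show (j : ℕ) = (i : ℕ) by omega, dseq_at]
      linear_combination e2 + e3
    · -- top
      have e2 : sseq a (n - 1) = sseq a (n - 2) + dseq a (n - 1) := by
        unfold sseq
        rw [show (n - 1) + 1 = ((n - 2) + 1) + 1 by omega, sum_range_succ,
          show (n - 2) + 1 = n - 1 by omega]
      have e3 : dseq a (n - 1) = a i i := by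
        rw [show n - 1 = (i : ℕ) by omega, dseq_at]
      rw [show (j : ℕ) - 1 = n - 2 by omega]
      linear_combination e2 + e3 - s_top hn a ha
    
  · rw [if_neg (fun hji => hd (congrArg Fin.val hji))]
    split_ifs <;> try (exfalso; omega)
    · -- superdiagonal
      have e1 : tseq a ((i : ℕ) + 1) = tseq a (i : ℕ) + gseq a (i : ℕ) := by
        unfold tseq
        rw [sum_range_succ]
      have e2 := gseq_at a i j (by omega)
      linear_combination e1 + e2
    · ring
    · ring
    

end Stmt2Aux

theorem stmt_2 (K : Type*) [Field K] [CharZero K] (n : ℕ) (hn : 3 ≤ n)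
    (a : Fin n → Fin n → K) (ha : ∑ i, a i i = 0) :
    ∃ A B C : Matrix (Fin n) (Fin n) K,
      A * ((A * B - B * A) * (A * C - C * A) - (A * C - C * A) * (A * B - B * A)) -
        ((A * B - B * A) * (A * C - C * A) - (A * C - C * A) * (A * B - B * A)) * A =
      upperBidiag a := by
  refine ⟨Stmt2Aux.Amat K n, Stmt2Aux.Bmat K n, Stmt2Aux.Cmat a, ?_⟩
  rw [Stmt2Aux.L1 hn, Stmt2Aux.L2 hn a, Stmt2Aux.L3 hn a, Stmt2Aux.L4 hn a ha]
end

section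
/- For any matrices A, B, C in an associative ring, the standard polynomial of degree 4 evaluated at (A, A², B, C) satisfies St₄(A, A², B, C) = [A, [[A,B],[A,C]]]. -/
/-- The standard polynomial of degree 4 evaluated at a 4-tuple in a ring. -/
def st4 {R : Type*} [Ring R] (x : Fin 4 → R) : R :=
  ∑ σ : Equiv.Perm (Fin 4),
    (Equiv.Perm.sign σ : ℤ) • (x (σ 0) * x (σ 1) * x (σ 2) * x (σ 3))

theorem sum_perm_four {R : Type*} [AddCommMonoid R] (f : Equiv.Perm (Fin 4) → R) :
    ∑ σ : Equiv.Perm (Fin 4), f σ =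
      ∑ p : Fin 4, ∑ q : Fin 3, ∑ r : Fin 2,
        f (Equiv.Perm.decomposeFin.symm (p, Equiv.Perm.decomposeFin.symm (q, Equiv.Perm.decomposeFin.symm (r, 1)))) := by
  rw [← Equiv.sum_comp (Equiv.Perm.decomposeFin.symm) f, Fintype.sum_prod_type]
  congr 1; ext p
  rw [← Equiv.sum_comp (Equiv.Perm.decomposeFin.symm), Fintype.sum_prod_type]
  congr 1; ext q
  rw [← Equiv.sum_comp (Equiv.Perm.decomposeFin.symm), Fintype.sum_prod_type]
  congr 1; ext r
  rw [Finset.sum_eq_single (1 : Equiv.Perm (Fin 1))]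
  · intro b _ hb; exact absurd (Subsingleton.elim b 1) hb
  · simp

set_option maxHeartbeats 2000000 in
theorem stmt_3 {R : Type*} [Ring R] (A B C : R) :
    st4 ![A, A ^ 2, B, C] =
      A * ((A * B - B * A) * (A * C - C * A) - (A * C - C * A) * (A * B - B * A)) -
        ((A * B - B * A) * (A * C - C * A) - (A * C - C * A) * (A * B - B * A)) * A := by
  rw [st4, sum_perm_four]
  simp only [show (1 : Fin 4) = Fin.succ 0 from rfl, show (2 : Fin 4) = Fin.succ 1 from rfl,
    show (3 : Fin 4) = Fin.succ 2 from rfl,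
    show (1 : Fin 3) = Fin.succ 0 from rfl, show (2 : Fin 3) = Fin.succ 1 from rfl,
    show (1 : Fin 2) = Fin.succ 0 from rfl,
    Fin.sum_univ_succ, Fin.sum_univ_zero,
    Equiv.Perm.decomposeFin_symm_of_one,
    Equiv.Perm.decomposeFin_symm_apply_zero, Equiv.Perm.decomposeFin_symm_apply_succ,
    Equiv.Perm.decomposeFin.symm_sign, Equiv.Perm.sign_one, Equiv.Perm.one_apply]
  simp +decide only [Equiv.swap_apply_def,
    Fin.succ_zero_eq_one, Fin.succ_one_eq_two,
    show Fin.succ (2 : Fin 3) = 3 from rfl, show Fin.succ (1 : Fin 2) = 2 from rfl,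
    show Fin.succ (0 : Fin 1) = 1 from rfl]
  norm_num [Matrix.cons_val_zero, Matrix.cons_val_one, Matrix.head_cons, Matrix.cons_val_succ]
  noncomm_ring
  abel
end

section
/- Let K be an algebraically closed field of characteristic zero and n ≥ 3. Then every trace zero matrix D ∈ M_n(K) can be written as D = [[A,B],[A,C]] for suitable matrices A, B, C ∈ M_n(K). -/
open Matrix

open Finset

namespace Stmt4Aux

variable {K : Type*} [Field K] {n : ℕ}

/-- matrix entry with ℕ indices, 0 when out of range -/
def ent (M : Matrix (Fin n) (Fin n) K) (i j : ℕ) : K :=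
  if h : i < n ∧ j < n then M ⟨i, h.1⟩ ⟨j, h.2⟩ else 0

lemma ent_eq (M : Matrix (Fin n) (Fin n) K) {i j : ℕ} (hi : i < n) (hj : j < n) :
    ent M i j = M ⟨i, hi⟩ ⟨j, hj⟩ := dif_pos ⟨hi, hj⟩

lemma ent_apply (M : Matrix (Fin n) (Fin n) K) (i j : Fin n) :
    ent M i.val j.val = M i j := by
  rw [ent_eq M i.isLt j.isLt]

lemma ent_out_left (M : Matrix (Fin n) (Fin n) K) {i : ℕ} (j : ℕ) (h : n ≤ i) :
    ent M i j = 0 := by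
  simp only [ent]; rw [dif_neg]; omega

lemma ent_out_right (M : Matrix (Fin n) (Fin n) K) (i : ℕ) {j : ℕ} (h : n ≤ j) :
    ent M i j = 0 := by
  simp only [ent]; rw [dif_neg]; omega

/-- the nilpotent shift matrix, ones on the superdiagonal -/
def Nn (n : ℕ) (K : Type*) [Field K] : Matrix (Fin n) (Fin n) K :=
  Matrix.of fun i j => if (i : ℕ) + 1 = (j : ℕ) then 1 else 0

/-- the "antiderivative" operator: Ψ(M) p q = ∑_{a<p} M_{a, a+q+1-p} -/
def psi (M : Matrix (Fin n) (Fin n) K) : Matrix (Fin n) (Fin n) K :=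
  Matrix.of fun p q => ∑ a ∈ Finset.range (p : ℕ),
    (if (p : ℕ) ≤ a + (q : ℕ) + 1 then ent M a (a + (q : ℕ) + 1 - (p : ℕ)) else 0)

lemma psi_apply (M : Matrix (Fin n) (Fin n) K) (p q : Fin n) :
    psi M p q = ∑ a ∈ Finset.range (p : ℕ),
      (if (p : ℕ) ≤ a + (q : ℕ) + 1 then ent M a (a + (q : ℕ) + 1 - (p : ℕ)) else 0) := rfl

lemma ent_psi (M : Matrix (Fin n) (Fin n) K) {p q : ℕ} (hp : p < n) (hq : q < n) :
    ent (psi M) p q = ∑ a ∈ Finset.range p,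
      (if p ≤ a + q + 1 then ent M a (a + q + 1 - p) else 0) := by
  rw [ent_eq (psi M) hp hq]; rfl

lemma Nn_mul_apply (M : Matrix (Fin n) (Fin n) K) (i j : Fin n) :
    (Nn n K * M) i j = ent M ((i : ℕ) + 1) j := by
  rw [mul_apply]
  by_cases h : (i : ℕ) + 1 < n
  · rw [ent_eq M h j.isLt,
      Finset.sum_eq_single_of_mem (⟨(i:ℕ)+1, h⟩ : Fin n) (Finset.mem_univ _)
        (fun b _ hb => by
          have : ¬((i:ℕ) + 1 = (b:ℕ)) := fun hc => hb (Fin.ext hc.symm)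
          simp [Nn, this])]
    simp [Nn]
  · rw [ent_out_left M _ (by omega)]
    apply Finset.sum_eq_zero
    intro k _
    have : ¬ ((i : ℕ) + 1 = (k : ℕ)) := by have := k.isLt; omega
    simp [Nn, this]

lemma mul_Nn_apply (M : Matrix (Fin n) (Fin n) K) (i j : Fin n) :
    (M * Nn n K) i j = if (j : ℕ) = 0 then 0 else ent M i ((j : ℕ) - 1) := by
  rw [mul_apply]
  by_cases hj : (j : ℕ) = 0
  · rw [if_pos hj]
    apply Finset.sum_eq_zero
    intro k _
    have : ¬ ((k : ℕ) + 1 = (j : ℕ)) := by omega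
    simp [Nn, this]
  · rw [if_neg hj]
    have hlt : (j : ℕ) - 1 < n := by have := j.isLt; omega
    rw [ent_eq M i.isLt hlt,
      Finset.sum_eq_single_of_mem (⟨(j:ℕ)-1, hlt⟩ : Fin n) (Finset.mem_univ _)
        (fun b _ hb => by
          have : ¬((b:ℕ) + 1 = (j:ℕ)) := fun hc =>
            hb (by apply Fin.ext; show (b:ℕ) = (j:ℕ)-1; omega)
          simp [Nn, this])]
    have : ((⟨(j:ℕ)-1, hlt⟩ : Fin n) : ℕ) + 1 = (j : ℕ) := show ((j:ℕ)-1)+1 = (j:ℕ) by omega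
    simp [Nn, this]

/-- shifting sums with a guard -/
lemma shift_sum (f : ℕ → K) (d m : ℕ) :
    ∑ a ∈ Finset.range m, (if d ≤ a then f (a - d) else 0) = ∑ c ∈ Finset.range (m - d), f c := by
  induction m with
  | zero => simp
  | succ m ih =>
    rw [Finset.sum_range_succ, ih]
    by_cases h : d ≤ m
    · rw [if_pos h, show m + 1 - d = (m - d) + 1 by omega, Finset.sum_range_succ]
    · rw [if_neg h, show m + 1 - d = 0 by omega, show m - d = 0 by omega, add_zero]

/-- lower diagonal sums -/
def sdiag (M : Matrix (Fin n) (Fin n) K) (d : ℕ) : K := ∑ a ∈ Finset.range n, ent M (a + d) a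

/-- The main workhorse: if all lower diagonal sums of M vanish, then [N, Ψ(M)] = M. -/
theorem psi_comm (M : Matrix (Fin n) (Fin n) K) (h : ∀ d : ℕ, sdiag M d = 0) :
    Nn n K * psi M - psi M * Nn n K = M := by
  have key : ∀ jv : ℕ, jv < n →
      ∑ a ∈ Finset.range n, (if n - 1 ≤ a + jv then ent M a (a + jv - (n-1)) else 0) = 0 := by
    intro jv hjv
    have hd := h (n - 1 - jv)
    rw [sdiag] at hd
    rw [show (∑ a ∈ Finset.range n, (if n - 1 ≤ a + jv then ent M a (a + jv - (n-1)) else 0))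
        = ∑ a ∈ Finset.range n, (if (n - 1 - jv) ≤ a then ent M ((a - (n-1-jv)) + (n-1-jv)) (a - (n - 1 - jv)) else 0) by
      apply Finset.sum_congr rfl; intro a _
      by_cases hc : n - 1 ≤ a + jv
      · rw [if_pos hc, if_pos (by omega)]; congr 1 <;> omega
      · rw [if_neg hc, if_neg (by omega)]]
    rw [shift_sum (fun c => ent M (c + (n-1-jv)) c)]
    rw [← hd]
    apply Finset.sum_subset
    · intro x hx; simp only [Finset.mem_range] at *; omega
    · intro x hx1 hx2
      simp only [Finset.mem_range, not_lt] at hx1 hx2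
      exact ent_out_left M _ (by omega)
  ext i j
  rw [Matrix.sub_apply, Nn_mul_apply, mul_Nn_apply]
  by_cases hj : (j : ℕ) = 0
  · rw [if_pos hj]
    by_cases hi : (i : ℕ) + 1 < n
    · rw [sub_zero, ent_psi M hi j.isLt, hj, Finset.sum_range_succ,
        Finset.sum_eq_zero (fun a ha => by
          simp only [Finset.mem_range] at ha
          rw [if_neg (by omega)]),
        zero_add, if_pos (by omega), show (i:ℕ) + 0 + 1 - ((i:ℕ)+1) = 0 by omega,
        ← hj, ent_apply]
    · rw [ent_out_left (psi M) _ (by omega), sub_zero]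
      have hk := key 0 (by omega)
      have hsing : (∑ a ∈ Finset.range n, (if n - 1 ≤ a + 0 then ent M a (a + 0 - (n-1)) else 0))
          = ent M (n-1) 0 := by
        rw [Finset.sum_eq_single_of_mem (n-1) (Finset.mem_range.mpr (by omega))
          (fun b hb hbne => by
            simp only [Finset.mem_range] at hb
            rw [if_neg (by omega)])]
        rw [if_pos (by omega), show n - 1 + 0 - (n-1) = 0 by omega]
      rw [hsing] at hk
      have : ent M (i:ℕ) (j:ℕ) = 0 := by rw [show (i:ℕ) = n-1 by omega, hj]; exact hk
      rw [← ent_apply M i j, this]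
  · rw [if_neg hj]
    have hj1 : (j:ℕ) - 1 < n := by have := j.isLt; omega
    by_cases hi : (i : ℕ) + 1 < n
    · rw [ent_psi M hi j.isLt, ent_psi M i.isLt hj1]
      have hsame : ∀ a ∈ Finset.range (i:ℕ),
          (if (i:ℕ) ≤ a + ((j:ℕ)-1) + 1 then ent M a (a + ((j:ℕ)-1) + 1 - (i:ℕ)) else 0)
          = (if (i:ℕ)+1 ≤ a + (j:ℕ) + 1 then ent M a (a + (j:ℕ) + 1 - ((i:ℕ)+1)) else 0) := by
        intro a _
        by_cases hc : (i:ℕ) ≤ a + ((j:ℕ)-1) + 1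
        · rw [if_pos hc, if_pos (by omega)]; congr 1; omega
        · rw [if_neg hc, if_neg (by omega)]
      rw [Finset.sum_congr rfl hsame, Finset.sum_range_succ, add_sub_cancel_left,
        if_pos (by omega), show (i:ℕ) + (j:ℕ) + 1 - ((i:ℕ)+1) = (j:ℕ) by omega, ent_apply]
    · have hi' : (i : ℕ) = n - 1 := by have := i.isLt; omega
      rw [ent_out_left (psi M) _ (by omega), zero_sub, ent_psi M i.isLt hj1]
      have hk := key (j:ℕ) j.isLt
      rw [show Finset.range n = Finset.range ((n-1)+1) from by congr 1; omega,
        Finset.sum_range_succ] at hk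
      rw [if_pos (by omega), show n - 1 + (j:ℕ) - (n-1) = (j:ℕ) by omega] at hk
      have hMij : ent M (n-1) (j:ℕ) = M i j := by
        rw [← hi']; exact ent_apply M i j
      rw [hMij] at hk
      have hsum : (∑ a ∈ Finset.range ((i:ℕ)),
          (if (i:ℕ) ≤ a + ((j:ℕ)-1) + 1 then ent M a (a + ((j:ℕ)-1) + 1 - (i:ℕ)) else 0))
          = ∑ a ∈ Finset.range (n-1), (if n - 1 ≤ a + (j:ℕ) then ent M a (a + (j:ℕ) - (n-1)) else 0) := by
        rw [hi']
        apply Finset.sum_congr rfl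
        intro a _
        by_cases hc : n - 1 ≤ a + ((j:ℕ)-1) + 1
        · rw [if_pos hc, if_pos (by omega)]; congr 1; omega
        · rw [if_neg hc, if_neg (by omega)]
      rw [hsum]
      linear_combination -hk


section Core
variable [CharZero K]

lemma conj_scalar {c : K} (x : K) (hc : c ≠ 0) : c * x * c⁻¹ = x := by
  rw [mul_comm, ← mul_assoc, inv_mul_cancel₀ hc, one_mul]

lemma conj_mul {G Gi : Matrix (Fin n) (Fin n) K} (h : Gi * G = 1)
    (P Q : Matrix (Fin n) (Fin n) K) :
    (G * P * Gi) * (G * Q * Gi) = G * (P * Q) * Gi := by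
  rw [show (G * P * Gi) * (G * Q * Gi) = G * P * (Gi * G) * (Q * Gi) by
      simp only [mul_assoc], h, mul_one]
  simp only [mul_assoc]

/-- The core construction: an upper triangular trace-zero matrix with an admissible
weight sequence is an iterated commutator of the required shape. -/
theorem core (hn : 0 < n) (T : Matrix (Fin n) (Fin n) K)
    (hUT : ∀ i j : Fin n, (j:ℕ) < (i:ℕ) → T i j = 0) (htr : Matrix.trace T = 0)
    (g : ℕ → K) (hg : ∀ i, g i ≠ 0)
    (hs : ∑ q ∈ Finset.range (n-1), (g (q+1) * (g q)⁻¹) *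
        (∑ i ∈ Finset.range (q+1), ent T i i) = 0) :
    ∃ A B C : Matrix (Fin n) (Fin n) K,
      T = (A*B - B*A) * (A*C - C*A) - (A*C - C*A) * (A*B - B*A) := by
  have htr' : ∑ a ∈ Finset.range n, ent T a a = 0 := by
    rw [show (∑ a ∈ Finset.range n, ent T a a) = ∑ a : Fin n, T a a from ?_]
    · exact htr
    · rw [← Fin.sum_univ_eq_sum_range (fun a => ent T a a) n]
      exact Finset.sum_congr rfl fun a _ => ent_apply T a a
  set G : Matrix (Fin n) (Fin n) K := Matrix.diagonal (fun i : Fin n => g i) with hG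
  set Gi : Matrix (Fin n) (Fin n) K := Matrix.diagonal (fun i : Fin n => (g i)⁻¹) with hGi
  have hGGi : G * Gi = 1 := by
    rw [hG, hGi, Matrix.diagonal_mul_diagonal]
    rw [show (fun i : Fin n => g i * (g i)⁻¹) = fun _ => (1:K) from
      funext fun i => mul_inv_cancel₀ (hg i)]
    exact Matrix.diagonal_one
  have hGiG : Gi * G = 1 := by
    rw [hG, hGi, Matrix.diagonal_mul_diagonal]
    rw [show (fun i : Fin n => (g i)⁻¹ * g i) = fun _ => (1:K) from
      funext fun i => inv_mul_cancel₀ (hg i)]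
    exact Matrix.diagonal_one
  set T' : Matrix (Fin n) (Fin n) K := Gi * T * G with hT'
  have hT'app : ∀ i j : Fin n, T' i j = (g i)⁻¹ * T i j * g j := by
    intro i j
    rw [hT', hG, hGi, Matrix.mul_diagonal, Matrix.diagonal_mul]
  have hT'low : ∀ i j : Fin n, (j:ℕ) < (i:ℕ) → T' i j = 0 := by
    intro i j hij; rw [hT'app, hUT i j hij, mul_zero, zero_mul]
  have hT'ent_low : ∀ p q : ℕ, q < p → ent T' p q = 0 := by
    intro p q hpq
    by_cases h : p < n ∧ q < n
    · rw [ent_eq T' h.1 h.2]; exact hT'low _ _ hpq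
    · simp only [ent]; rw [dif_neg h]
  have hT'diag : ∀ a : ℕ, ent T' a a = ent T a a := by
    intro a
    by_cases h : a < n
    · rw [ent_eq T' h h, ent_eq T h h, hT'app,
        show (g ((⟨a,h⟩ : Fin n) : ℕ))⁻¹ * T ⟨a,h⟩ ⟨a,h⟩ * g ((⟨a,h⟩ : Fin n) : ℕ)
          = g a * (T ⟨a,h⟩ ⟨a,h⟩) * (g a)⁻¹ by ring, conj_scalar _ (hg a)]
    · rw [ent_out_left T' _ (by omega), ent_out_left T _ (by omega)]
  have hsdT' : ∀ d : ℕ, sdiag T' d = 0 := by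
    intro d
    rcases Nat.eq_zero_or_pos d with hd | hd
    · subst hd
      rw [sdiag]
      simp only [add_zero]
      rw [Finset.sum_congr rfl fun a _ => hT'diag a]
      exact htr'
    · rw [sdiag]
      apply Finset.sum_eq_zero
      intro a _
      exact hT'ent_low _ _ (by omega)
  -- the matrix Y'
  set u : K := -(∑ a ∈ Finset.range n, ent (psi T') a a) * (n:K)⁻¹ with hu
  set Y' : Matrix (Fin n) (Fin n) K := psi T' + u • (1 : Matrix (Fin n) (Fin n) K) with hY'
  have hNY' : Nn n K * Y' - Y' * Nn n K = T' := by
    rw [hY', mul_add, add_mul, mul_smul_comm, smul_mul_assoc, mul_one, one_mul]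
    rw [show Nn n K * psi T' + u • Nn n K - (psi T' * Nn n K + u • Nn n K)
      = Nn n K * psi T' - psi T' * Nn n K by abel]
    exact psi_comm T' hsdT'
  have hY'ent : ∀ p q : ℕ, p < n → q < n →
      ent Y' p q = ent (psi T') p q + (if p = q then u else 0) := by
    intro p q hp hq
    rw [ent_eq Y' hp hq, ent_eq (psi T') hp hq, hY']
    rw [Matrix.add_apply, Matrix.smul_apply, Matrix.one_apply]
    by_cases h : p = q
    · subst h; rw [if_pos rfl, if_pos rfl]; simp
    · rw [if_neg h, if_neg (fun hc => h (by simpa [Fin.ext_iff] using hc))]; simp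
  set Y : Matrix (Fin n) (Fin n) K := G * Y' * Gi with hY
  have hYent : ∀ p q : ℕ, p < n → q < n →
      ent Y p q = g p * ent Y' p q * (g q)⁻¹ := by
    intro p q hp hq
    rw [ent_eq Y hp hq, ent_eq Y' hp hq, hY, hG, hGi,
      Matrix.mul_diagonal, Matrix.diagonal_mul]
  -- lower diagonal entries of psi T' of depth ≥ 2 vanish
  have hpsilow : ∀ p q : ℕ, q + 2 ≤ p → p < n → q < n → ent (psi T') p q = 0 := by
    intro p q hpq hp hq
    rw [ent_psi T' hp hq]
    apply Finset.sum_eq_zero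
    intro a _
    by_cases hc : p ≤ a + q + 1
    · rw [if_pos hc]; exact hT'ent_low _ _ (by omega)
    · rw [if_neg hc]
  -- subdiagonal of psi T' : partial sums
  have hpsisub : ∀ a : ℕ, a + 1 < n →
      ent (psi T') (a+1) a = ∑ i ∈ Finset.range (a+1), ent T i i := by
    intro a ha
    rw [ent_psi T' ha (by omega)]
    apply Finset.sum_congr rfl
    intro b hb
    simp only [Finset.mem_range] at hb
    rw [if_pos (by omega), show b + a + 1 - (a+1) = b by omega, hT'diag]
  have hsdY : ∀ d : ℕ, sdiag Y d = 0 := by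
    intro d
    match d with
    | 0 =>
      rw [sdiag]
      have hterm : ∀ a ∈ Finset.range n, ent Y (a + 0) a = ent (psi T') a a + u := by
        intro a ha
        simp only [Finset.mem_range] at ha
        rw [add_zero, hYent a a ha ha, hY'ent a a ha ha, if_pos rfl,
          conj_scalar _ (hg a)]
      rw [Finset.sum_congr rfl hterm, Finset.sum_add_distrib, Finset.sum_const,
        Finset.card_range, nsmul_eq_mul, hu]
      have hn' : (n:K) ≠ 0 := Nat.cast_ne_zero.mpr hn.ne'
      field_simp
      ring
    | 1 =>
      rw [sdiag]
      have hterm : ∀ a ∈ Finset.range n, ent Y (a + 1) a =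
          (if a + 1 < n then (g (a+1) * (g a)⁻¹) * (∑ i ∈ Finset.range (a+1), ent T i i) else 0) := by
        intro a ha
        simp only [Finset.mem_range] at ha
        by_cases h : a + 1 < n
        · rw [if_pos h, hYent _ _ h ha, hY'ent _ _ h ha, if_neg (by omega), add_zero,
            hpsisub a h]
          ring
        · rw [if_neg h, ent_out_left Y _ (by omega)]
      rw [Finset.sum_congr rfl hterm,
        show Finset.range n = Finset.range ((n-1)+1) from by congr 1; omega,
        Finset.sum_range_succ, if_neg (by omega), add_zero,
        Finset.sum_congr rfl (fun a ha =>
          if_pos (by simp only [Finset.mem_range] at ha; omega))]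
      exact hs
    | (e+2) =>
      rw [sdiag]
      apply Finset.sum_eq_zero
      intro a _
      by_cases h : a + (e+2) < n
      · rw [hYent _ _ h (by omega), hY'ent _ _ h (by omega), if_neg (by omega), add_zero,
          hpsilow _ _ (by omega) h (by omega)]
        simp
      · exact ent_out_left Y _ (by omega)
  set C : Matrix (Fin n) (Fin n) K := psi Y with hC
  have hNC : Nn n K * C - C * Nn n K = Y := psi_comm Y hsdY
  set β : Fin n → K := fun p => ∑ q ∈ Finset.range (p:ℕ), g q * (g (q+1))⁻¹ with hβ
  set B : Matrix (Fin n) (Fin n) K := Matrix.diagonal β with hB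
  set X : Matrix (Fin n) (Fin n) K := G * Nn n K * Gi with hX
  have hNB : Nn n K * B - B * Nn n K = X := by
    ext i j
    rw [Matrix.sub_apply, hB, Matrix.mul_diagonal, Matrix.diagonal_mul,
      hX, hG, hGi, Matrix.mul_diagonal, Matrix.diagonal_mul]
    by_cases hij : (i:ℕ) + 1 = (j:ℕ)
    · have hNij : Nn n K i j = 1 := by simp [Nn, hij]
      rw [hNij, hβ]
      simp only []
      rw [← hij, Finset.sum_range_succ]
      ring
    · have hNij : Nn n K i j = 0 := by simp [Nn, hij]
      rw [hNij]; ring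
  refine ⟨Nn n K, B, C, ?_⟩
  rw [hNB, hNC]
  have e1 : X * Y = G * (Nn n K * Y') * Gi := by rw [hX, hY]; exact conj_mul hGiG _ _
  have e2 : Y * X = G * (Y' * Nn n K) * Gi := by rw [hX, hY]; exact conj_mul hGiG _ _
  rw [e1, e2, show G * (Nn n K * Y') * Gi - G * (Y' * Nn n K) * Gi
      = G * (Nn n K * Y' - Y' * Nn n K) * Gi by
    rw [Matrix.mul_sub, Matrix.sub_mul], hNY', hT']
  rw [show G * (Gi * T * G) * Gi = (G * Gi) * T * (G * Gi) by simp only [mul_assoc], hGGi,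
    one_mul, mul_one]

end Core


section Swap

/-- conjugation by the permutation matrix of an involutive permutation -/
lemma perm_conj (M : Matrix (Fin n) (Fin n) K) (σ : Equiv.Perm (Fin n))
    (hinv : ∀ x, σ (σ x) = x) :
    ∃ P : Matrix (Fin n) (Fin n) K, P * P = 1 ∧ ∀ i j, (P * M * P) i j = M (σ i) (σ j) := by
  refine ⟨Matrix.of fun i j => if σ i = j then (1:K) else 0, ?_, ?_⟩
  · ext i j
    rw [mul_apply, Finset.sum_eq_single_of_mem (σ i) (Finset.mem_univ _)
      (fun b _ hb => by simp [Matrix.of_apply, Ne.symm hb])]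
    · simp only [Matrix.of_apply, Matrix.one_apply]
      by_cases h : i = j
      · subst h; simp [hinv i]
      · have h2 : ¬ σ (σ i) = j := fun hc => h (by rw [← hinv i, hc])
        simp [h, h2]
  · intro i j
    have h1 : ∀ (Q : Matrix (Fin n) (Fin n) K) i j,
        ((Matrix.of fun i j => if σ i = j then (1:K) else 0) * Q) i j = Q (σ i) j := by
      intro Q i j
      rw [mul_apply, Finset.sum_eq_single_of_mem (σ i) (Finset.mem_univ _)
        (fun b _ hb => by simp [Matrix.of_apply, Ne.symm hb])]
      simp [Matrix.of_apply]
    have h2 : ∀ (Q : Matrix (Fin n) (Fin n) K) i j,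
        (Q * (Matrix.of fun i j => if σ i = j then (1:K) else 0)) i j = Q i (σ j) := by
      intro Q i j
      rw [mul_apply, Finset.sum_eq_single_of_mem (σ j) (Finset.mem_univ _)
        (fun b _ hb => by
          have : ¬ (σ b = j) := fun hc => hb (by rw [← hc, hinv])
          simp [Matrix.of_apply, this])]
      simp [Matrix.of_apply, hinv j]
    rw [h2, h1]

/-- swap adjacent diagonal entries of an upper triangular matrix by similarity -/
theorem swap_diag (T : Matrix (Fin n) (Fin n) K)
    (hUT : ∀ i j : Fin n, (j:ℕ) < (i:ℕ) → T i j = 0) (k : ℕ) (hk : k + 1 < n) :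
    ∃ (T₂ P Pi : Matrix (Fin n) (Fin n) K),
      P * Pi = 1 ∧ Pi * P = 1 ∧ T₂ = P * T * Pi ∧
      (∀ i j : Fin n, (j:ℕ) < (i:ℕ) → T₂ i j = 0) ∧
      (∀ a : ℕ, ent T₂ a a = if a = k then ent T (k+1) (k+1)
        else if a = k+1 then ent T k k else ent T a a) := by
  have hkn : k < n := by omega
  set K1 : Fin n := ⟨k, hkn⟩ with hK1
  set K2 : Fin n := ⟨k+1, hk⟩ with hK2
  by_cases hθ : T K1 K1 = T K2 K2
  · refine ⟨T, 1, 1, by simp, by simp, by simp, hUT, ?_⟩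
    intro a
    by_cases h1 : a = k
    · rw [if_pos h1, h1, ent_eq T hkn hkn, ent_eq T hk hk, hθ]
    · rw [if_neg h1]
      by_cases h2 : a = k+1
      · rw [if_pos h2, h2, ent_eq T hk hk, ent_eq T hkn hkn, hθ]
      · rw [if_neg h2]
  by_cases hc : T K1 K2 = 0
  · -- permutation case
    set σ : Equiv.Perm (Fin n) := Equiv.swap K1 K2 with hσ
    have hinv : ∀ x, σ (σ x) = x := fun x => Equiv.swap_apply_self _ _ x
    obtain ⟨P, hPP, hent⟩ := perm_conj T σ hinv
    refine ⟨P * T * P, P, P, hPP, hPP, rfl, ?_, ?_⟩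
    · intro i j hij
      rw [hent]
      rcases eq_or_ne i K2 with hi1 | hi1
      · subst hi1
        rw [hσ, Equiv.swap_apply_right]
        rcases eq_or_ne j K1 with hj1 | hj1
        · subst hj1; rw [Equiv.swap_apply_left]; exact hc
        · have hj2 : j ≠ K2 := by
            intro hc2; subst hc2; omega
          rw [Equiv.swap_apply_of_ne_of_ne hj1 hj2]
          apply hUT
          have : (j:ℕ) < k + 1 := hij
          have : (j:ℕ) ≠ k := fun hc2 => hj1 (Fin.ext hc2)
          show (j:ℕ) < k; omega
      · rcases eq_or_ne i K1 with hi2 | hi2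
        · subst hi2
          rw [hσ, Equiv.swap_apply_left]
          have hj1 : j ≠ K1 := by intro hc2; subst hc2; omega
          have hj2 : j ≠ K2 := by
            intro hc2; subst hc2; have : (k:ℕ)+1 < k := hij; omega
          rw [Equiv.swap_apply_of_ne_of_ne hj1 hj2]
          apply hUT
          show (j:ℕ) < k+1
          have : (j:ℕ) < k := hij
          omega
        · rw [hσ, Equiv.swap_apply_of_ne_of_ne hi2 hi1]
          rcases eq_or_ne j K1 with hj1 | hj1
          · subst hj1
            rw [Equiv.swap_apply_left]
            apply hUT
            show (k:ℕ)+1 < (i:ℕ)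
            have h3 : (k:ℕ) < (i:ℕ) := hij
            have h4 : (i:ℕ) ≠ k+1 := fun hc2 => hi1 (Fin.ext hc2)
            omega
          · rcases eq_or_ne j K2 with hj2 | hj2
            · subst hj2
              rw [Equiv.swap_apply_right]
              apply hUT
              show (k:ℕ) < (i:ℕ)
              have : (k:ℕ)+1 < (i:ℕ) := hij
              omega
            · rw [Equiv.swap_apply_of_ne_of_ne hj1 hj2]
              exact hUT i j hij
    · intro a
      by_cases h1 : a = k
      · rw [if_pos h1, h1, ent_eq _ hkn hkn, ent_eq T hk hk, hent,
          show (⟨k, hkn⟩ : Fin n) = K1 from rfl, hσ, Equiv.swap_apply_left]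
      · rw [if_neg h1]
        by_cases h2 : a = k+1
        · rw [if_pos h2, h2, ent_eq _ hk hk, ent_eq T hkn hkn, hent,
            show (⟨k+1, hk⟩ : Fin n) = K2 from rfl, hσ, Equiv.swap_apply_right]
        · rw [if_neg h2]
          by_cases ha : a < n
          · rw [ent_eq _ ha ha, ent_eq T ha ha, hent, hσ,
              Equiv.swap_apply_of_ne_of_ne
                (fun hc2 => h1 (by simpa [Fin.ext_iff, hK1] using hc2))
                (fun hc2 => h2 (by simpa [Fin.ext_iff, hK2] using hc2))]
          · rw [ent_out_left _ _ (by omega), ent_out_left T _ (by omega)]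
  · -- elementary conjugation case
    set w : K := (T K1 K1 - T K2 K2) * (T K1 K2)⁻¹ with hw
    have hwc : w * T K1 K2 = T K1 K1 - T K2 K2 := by
      rw [hw]; field_simp
    set E : Matrix (Fin n) (Fin n) K :=
      Matrix.of fun i j => if (i:ℕ) = k+1 ∧ (j:ℕ) = k then w else 0 with hE
    have hET : ∀ (Q : Matrix (Fin n) (Fin n) K) i j,
        (E * Q) i j = if (i:ℕ) = k+1 then w * Q K1 j else 0 := by
      intro Q i j
      rw [mul_apply, Finset.sum_eq_single_of_mem K1 (Finset.mem_univ _)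
        (fun b _ hb => by
          have hnb : ¬((i:ℕ) = k+1 ∧ (b:ℕ) = k) := fun hc =>
            hb (Fin.ext (show (b:ℕ) = (K1:ℕ) from hc.2))
          simp only [hE, Matrix.of_apply]
          rw [if_neg hnb, zero_mul])]
      by_cases h : (i:ℕ) = k+1
      · rw [if_pos h]; simp [hE, h, hK1]
      · rw [if_neg h]; simp [hE, h]
    have hTE : ∀ (Q : Matrix (Fin n) (Fin n) K) i j,
        (Q * E) i j = if (j:ℕ) = k then Q i K2 * w else 0 := by
      intro Q i j
      rw [mul_apply, Finset.sum_eq_single_of_mem K2 (Finset.mem_univ _)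
        (fun b _ hb => by
          have hnb : ¬((b:ℕ) = k+1 ∧ (j:ℕ) = k) := fun hc =>
            hb (Fin.ext (show (b:ℕ) = (K2:ℕ) from hc.1))
          simp only [hE, Matrix.of_apply]
          rw [if_neg hnb, mul_zero])]
      by_cases h : (j:ℕ) = k
      · rw [if_pos h]; simp [hE, h, hK2]
      · rw [if_neg h]; simp [hE, h]
    have hEE : E * E = 0 := by
      ext i j
      rw [hET]
      by_cases h : (i:ℕ) = k+1
      · rw [if_pos h]
        simp only [hE, Matrix.of_apply, hK1]
        rw [if_neg (by omega), mul_zero, Matrix.zero_apply]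
      · rw [if_neg h, Matrix.zero_apply]
    have hPP : (1 + E) * (1 - E) = 1 := by
      rw [show (1 + E) * (1 - E) = 1 - E * E by noncomm_ring, hEE, sub_zero]
    have hPP' : (1 - E) * (1 + E) = 1 := by
      rw [show (1 - E) * (1 + E) = 1 - E * E by noncomm_ring, hEE, sub_zero]
    set T₂ : Matrix (Fin n) (Fin n) K := (1 + E) * T * (1 - E) with hT₂
    have hT₂app : ∀ i j, T₂ i j = T i j + (if (i:ℕ) = k+1 then w * T K1 j else 0)
        - (if (j:ℕ) = k then T i K2 * w else 0)
        - (if (j:ℕ) = k then (if (i:ℕ) = k+1 then w * T K1 K2 else 0) * w else 0) := by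
      intro i j
      rw [hT₂, show (1 + E) * T * (1 - E) = T + E * T - T * E - E * T * E by noncomm_ring]
      rw [Matrix.sub_apply, Matrix.sub_apply, Matrix.add_apply, hET, hTE, hTE (E * T),
        hET T i K2]
    refine ⟨T₂, 1 + E, 1 - E, hPP, hPP', rfl, ?_, ?_⟩
    · intro i j hij
      rw [hT₂app]
      by_cases hi : (i:ℕ) = k+1
      · by_cases hjk : (j:ℕ) = k
        · have hiK : i = K2 := Fin.ext hi
          have hjK : j = K1 := Fin.ext hjk
          rw [if_pos hi, if_pos hjk, if_pos hjk, if_pos hi, hUT i j hij, hiK, hjK, hwc]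
          ring
        · rw [if_pos hi, if_neg hjk, if_neg hjk, hUT i j hij,
            hUT K1 j (by show (j:ℕ) < k; have h5 : (j:ℕ) < k+1 := hi ▸ hij; omega)]
          ring
      · by_cases hjk : (j:ℕ) = k
        · rw [if_neg hi, if_pos hjk, if_pos hjk, if_neg hi, hUT i j hij,
            hUT i K2 (by show (k:ℕ)+1 < (i:ℕ); have h5 : (k:ℕ) < (i:ℕ) := hjk ▸ hij; omega)]
          ring
        · rw [if_neg hi, if_neg hjk, if_neg hjk, hUT i j hij]
          ring
    · intro a
      by_cases h1 : a = k
      · rw [if_pos h1, h1, ent_eq _ hkn hkn, ent_eq T hk hk, hT₂app]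
        simp only [show ((⟨k, hkn⟩ : Fin n) : ℕ) = k from rfl, eq_self_iff_true, if_true]
        rw [if_neg (show ¬(k = k+1) by omega), if_neg (show ¬(k = k+1) by omega)]
        rw [show T (⟨k, hkn⟩ : Fin n) K2 * w = T K1 K1 - T K2 K2 from by
            rw [mul_comm]; exact hwc,
          show T (⟨k+1, hk⟩ : Fin n) (⟨k+1, hk⟩ : Fin n) = T K2 K2 from rfl,
          show T (⟨k, hkn⟩ : Fin n) (⟨k, hkn⟩ : Fin n) = T K1 K1 from rfl]
        ring
      · rw [if_neg h1]
        by_cases h2 : a = k+1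
        · rw [if_pos h2, h2, ent_eq _ hk hk, ent_eq T hkn hkn, hT₂app]
          simp only [show ((⟨k+1, hk⟩ : Fin n) : ℕ) = k+1 from rfl, eq_self_iff_true, if_true]
          rw [if_neg (show ¬(k+1 = k) by omega), if_neg (show ¬(k+1 = k) by omega)]
          rw [show T K1 (⟨k+1, hk⟩ : Fin n) = T K1 K2 from rfl, hwc,
            show T (⟨k+1, hk⟩ : Fin n) (⟨k+1, hk⟩ : Fin n) = T K2 K2 from rfl,
            show T (⟨k, hkn⟩ : Fin n) (⟨k, hkn⟩ : Fin n) = T K1 K1 from rfl]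
          ring
        · rw [if_neg h2]
          by_cases ha : a < n
          · rw [ent_eq _ ha ha, ent_eq T ha ha, hT₂app]
            simp only [show ((⟨a, ha⟩ : Fin n) : ℕ) = a from rfl]
            rw [if_neg (show ¬(a = k+1) by omega), if_neg (show ¬(a = k) by omega),
              if_neg (show ¬(a = k) by omega)]
            ring
          · rw [ent_out_left _ _ (by omega), ent_out_left T _ (by omega)]

end Swap


section Good
variable [CharZero K]

/-- partial sums of the diagonal -/
def sfun (T : Matrix (Fin n) (Fin n) K) (q : ℕ) : K := ∑ i ∈ Finset.range (q+1), ent T i i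

def delta (T : Matrix (Fin n) (Fin n) K) : K := ∑ q ∈ Finset.range (n-1), sfun T q

lemma trace_ent (T : Matrix (Fin n) (Fin n) K) :
    Matrix.trace T = ∑ a ∈ Finset.range n, ent T a a := by
  rw [Matrix.trace]
  rw [← Fin.sum_univ_eq_sum_range (fun a => ent T a a) n]
  exact Finset.sum_congr rfl fun a _ => (ent_apply T a a).symm

def GoodW (T : Matrix (Fin n) (Fin n) K) : Prop :=
  ∃ g : ℕ → K, (∀ i, g i ≠ 0) ∧
    ∑ q ∈ Finset.range (n-1), (g (q+1) * (g q)⁻¹) *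
      (∑ i ∈ Finset.range (q+1), ent T i i) = 0

lemma goodW_of_delta_zero (T : Matrix (Fin n) (Fin n) K) (hδ : delta T = 0) : GoodW T := by
  refine ⟨fun _ => 1, fun _ => one_ne_zero, ?_⟩
  rw [← hδ, delta]
  apply Finset.sum_congr rfl
  intro q _
  rw [sfun]
  simp

lemma goodW_of_index (T : Matrix (Fin n) (Fin n) K) (j₀ : ℕ) (hj : j₀ < n-1)
    (h0 : sfun T j₀ ≠ 0) (hδ : sfun T j₀ ≠ delta T) : GoodW T := by
  set v : K := 1 - delta T * (sfun T j₀)⁻¹ with hv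
  have hvne : v ≠ 0 := by
    intro hc
    rw [hv] at hc
    have h4 : (1 - delta T * (sfun T j₀)⁻¹) * sfun T j₀ = 0 := by rw [hc, zero_mul]
    rw [sub_mul, one_mul, mul_assoc, inv_mul_cancel₀ h0, mul_one, sub_eq_zero] at h4
    exact hδ h4
  refine ⟨fun i => if i ≤ j₀ then 1 else v, fun i => by
    by_cases h : i ≤ j₀ <;> simp [h, hvne], ?_⟩
  have hw : ∀ q ∈ Finset.range (n-1),
      ((if q+1 ≤ j₀ then (1:K) else v) * (if q ≤ j₀ then (1:K) else v)⁻¹) *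
        (∑ i ∈ Finset.range (q+1), ent T i i)
      = sfun T q + (if q = j₀ then (v - 1) * sfun T j₀ else 0) := by
    intro q _
    by_cases h1 : q = j₀
    · subst h1
      rw [if_neg (by omega), if_pos (le_refl q), if_pos rfl, ← sfun]
      simp only [inv_one, mul_one]
      ring
    · rw [if_neg h1, add_zero, ← sfun]
      by_cases h2 : q < j₀
      · rw [if_pos (by omega), if_pos (by omega)]
        simp
      · rw [if_neg (by omega), if_neg (by omega), mul_inv_cancel₀ hvne, one_mul]
  rw [Finset.sum_congr rfl hw, Finset.sum_add_distrib, ← delta,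
    Finset.sum_ite_eq' (Finset.range (n-1)) j₀ (fun _ => (v - 1) * sfun T j₀),
    if_pos (Finset.mem_range.mpr hj)]
  rw [show (v - 1) * sfun T j₀ = -(delta T * ((sfun T j₀)⁻¹ * sfun T j₀)) by rw [hv]; ring,
    inv_mul_cancel₀ h0, mul_one]
  ring

lemma sum_swap_split (f : ℕ → K) (k m : ℕ) (hm : k + 1 < m) :
    ∑ i ∈ Finset.range m, (if i = k then f (k+1) else if i = k+1 then f k else f i)
      = ∑ i ∈ Finset.range m, f i := by
  have hpt : ∀ i, (if i = k then f (k+1) else if i = k+1 then f k else f i)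
      = f i + (if i = k then f (k+1) - f k else 0) + (if i = k+1 then f k - f (k+1) else 0) := by
    intro i
    by_cases h1 : i = k
    · subst h1; rw [if_pos rfl, if_pos rfl, if_neg (by omega)]; ring
    · rw [if_neg h1, if_neg h1]
      by_cases h2 : i = k+1
      · subst h2; rw [if_pos rfl, if_pos rfl]; ring
      · rw [if_neg h2, if_neg h2]; ring
  rw [Finset.sum_congr rfl (fun i _ => hpt i), Finset.sum_add_distrib, Finset.sum_add_distrib,
    Finset.sum_ite_eq' (Finset.range m) k (fun _ => f (k+1) - f k),
    Finset.sum_ite_eq' (Finset.range m) (k+1) (fun _ => f k - f (k+1)),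
    if_pos (Finset.mem_range.mpr (by omega)), if_pos (Finset.mem_range.mpr hm)]
  ring

/-- Main reduction: any upper triangular trace zero matrix (n ≥ 3) is similar, via an
explicitly invertible conjugation, to an upper triangular matrix admitting good weights. -/
theorem upper_good (hn : 3 ≤ n) (T : Matrix (Fin n) (Fin n) K)
    (hUT : ∀ i j : Fin n, (j:ℕ) < (i:ℕ) → T i j = 0) (htr : Matrix.trace T = 0) :
    ∃ T₂ P Pi : Matrix (Fin n) (Fin n) K, P * Pi = 1 ∧ Pi * P = 1 ∧ T₂ = P * T * Pi ∧
      (∀ i j : Fin n, (j:ℕ) < (i:ℕ) → T₂ i j = 0) ∧ GoodW T₂ := by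
  classical
  by_cases hδ : delta T = 0
  · exact ⟨T, 1, 1, one_mul 1, one_mul 1, by rw [one_mul, mul_one], hUT,
      goodW_of_delta_zero T hδ⟩
  by_cases hex : ∃ j₀, j₀ < n-1 ∧ sfun T j₀ ≠ 0 ∧ sfun T j₀ ≠ delta T
  · obtain ⟨j₀, hj, h1, h2⟩ := hex
    exact ⟨T, 1, 1, one_mul 1, one_mul 1, by rw [one_mul, mul_one], hUT,
      goodW_of_index T j₀ hj h1 h2⟩
  push_neg at hex
  -- every nonzero partial sum equals delta; there is exactly one
  set S : Finset ℕ := (Finset.range (n-1)).filter (fun q => sfun T q ≠ 0) with hS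
  have hδS : delta T = ∑ q ∈ S, sfun T q := by
    rw [delta, hS]
    exact (Finset.sum_filter_ne_zero (Finset.range (n-1))).symm
  have hSval : ∀ q ∈ S, sfun T q = delta T := by
    intro q hq
    rw [hS, Finset.mem_filter, Finset.mem_range] at hq
    exact hex q hq.1 hq.2
  have hcard : S.card = 1 := by
    have h3 : delta T = (S.card : K) * delta T := by
      conv_lhs => rw [hδS]
      rw [Finset.sum_congr rfl hSval, Finset.sum_const, nsmul_eq_mul]
    have h4 : ((S.card : K) - 1) * delta T = 0 := by linear_combination -h3
    rcases mul_eq_zero.mp h4 with h5 | h5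
    · have h6 : (S.card : K) = 1 := by linear_combination h5
      exact_mod_cast h6
    · exact absurd h5 hδ
  obtain ⟨j₀, hSj⟩ := Finset.card_eq_one.mp hcard
  have hj₀mem : j₀ ∈ S := by rw [hSj]; exact Finset.mem_singleton_self j₀
  have hj₀lt : j₀ < n - 1 := by
    have := hj₀mem; rw [hS, Finset.mem_filter, Finset.mem_range] at this; exact this.1
  have hj₀ne : sfun T j₀ ≠ 0 := by
    have := hj₀mem; rw [hS, Finset.mem_filter] at this; exact this.2
  have hj₀δ : sfun T j₀ = delta T := hSval j₀ hj₀mem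
  have hzero : ∀ q, q < n - 1 → q ≠ j₀ → sfun T q = 0 := by
    intro q hq hqj
    by_contra hc
    have : q ∈ S := by rw [hS, Finset.mem_filter, Finset.mem_range]; exact ⟨hq, hc⟩
    rw [hSj, Finset.mem_singleton] at this
    exact hqj this
  have hsn1 : sfun T (n-1) = 0 := by
    rw [sfun, show n - 1 + 1 = n by omega, ← trace_ent, htr]
  have hstep : ∀ a : ℕ, 1 ≤ a → ent T a a = sfun T a - sfun T (a-1) := by
    intro a ha
    rw [sfun, sfun, Finset.sum_range_succ, show a - 1 + 1 = a by omega]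
    ring
  -- the swap position
  set k : ℕ := if j₀ + 2 < n then j₀ + 1 else j₀ - 1 with hkdef
  have hkn : k + 1 < n := by
    rw [hkdef]; split <;> omega
  have hkn1 : k < n - 1 := by omega
  obtain ⟨T₂, P, Pi, hPPi, hPiP, hT₂, hUT₂, hdiag⟩ := swap_diag T hUT k hkn
  -- partial sums of T₂
  have hsfun₂ : ∀ q, sfun T₂ q = ∑ i ∈ Finset.range (q+1),
      (if i = k then ent T (k+1) (k+1) else if i = k+1 then ent T k k else ent T i i) := by
    intro q
    rw [sfun]
    exact Finset.sum_congr rfl fun i _ => hdiag i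
  have hsfun₂_lt : ∀ q, q < k → sfun T₂ q = sfun T q := by
    intro q hq
    rw [hsfun₂, sfun]
    apply Finset.sum_congr rfl
    intro i hi
    simp only [Finset.mem_range] at hi
    rw [if_neg (by omega), if_neg (by omega)]
  have hsfun₂_gt : ∀ q, k + 1 ≤ q → sfun T₂ q = sfun T q := by
    intro q hq
    rw [hsfun₂ q, sfun]
    exact sum_swap_split (fun a => ent T a a) k (q+1) (by omega)
  have hsfun₂_k : sfun T₂ k = sfun T k - ent T k k + ent T (k+1) (k+1) := by
    rw [hsfun₂, Finset.sum_range_succ, if_pos rfl, sfun, Finset.sum_range_succ]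
    rw [Finset.sum_congr rfl (fun i hi => by
      simp only [Finset.mem_range] at hi
      rw [if_neg (by omega), if_neg (by omega)])]
    ring
  have hδ₂ : delta T₂ = delta T + (ent T (k+1) (k+1) - ent T k k) := by
    rw [delta, delta,
      Finset.sum_congr rfl (fun q (hq : q ∈ Finset.range (n-1)) => show sfun T₂ q
        = sfun T q + (if q = k then ent T (k+1) (k+1) - ent T k k else 0) from by
        simp only [Finset.mem_range] at hq
        rcases lt_trichotomy q k with h | h | h
        · rw [hsfun₂_lt q h, if_neg (by omega), add_zero]
        · subst h; rw [hsfun₂_k, if_pos rfl]; ring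
        · rw [hsfun₂_gt q (by omega), if_neg (by omega), add_zero]),
      Finset.sum_add_distrib,
      Finset.sum_ite_eq' (Finset.range (n-1)) k (fun _ => ent T (k+1) (k+1) - ent T k k),
      if_pos (Finset.mem_range.mpr hkn1)]
  -- sfun T₂ j₀ = sfun T j₀ = delta T ≠ 0
  have hsj₂ : sfun T₂ j₀ = sfun T j₀ := by
    by_cases hcase : j₀ + 2 < n
    · exact hsfun₂_lt j₀ (by rw [hkdef, if_pos hcase]; omega)
    · exact hsfun₂_gt j₀ (by rw [hkdef, if_neg hcase]; omega)
  -- the diagonal entries at k, k+1 differ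
  have hlamne : ent T (k+1) (k+1) ≠ ent T k k := by
    by_cases hcase : j₀ + 2 < n
    · have hk1 : k = j₀ + 1 := by rw [hkdef, if_pos hcase]
      have e1 : ent T (k+1) (k+1) = 0 := by
        rw [hk1, hstep (j₀+2) (by omega), show j₀ + 2 - 1 = j₀ + 1 by omega]
        rcases eq_or_lt_of_le (show j₀ + 2 ≤ n - 1 by omega) with h | h
        · rw [h, hsn1, hzero (j₀+1) (by omega) (by omega)]; ring
        · rw [hzero (j₀+2) (by omega) (by omega), hzero (j₀+1) (by omega) (by omega)]; ring
      have e2 : ent T k k = - delta T := by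
        rw [hk1, hstep (j₀+1) (by omega), show j₀ + 1 - 1 = j₀ by omega, hj₀δ,
          hzero (j₀+1) (by omega) (by omega)]
        ring
      rw [e1, e2]
      intro hc
      exact hδ (by linear_combination hc)
    · have hj₀eq : j₀ = n - 2 := by omega
      have hj₀1 : 1 ≤ j₀ := by omega
      have hk1 : k = j₀ - 1 := by rw [hkdef, if_neg hcase]
      have e1 : ent T (k+1) (k+1) = delta T := by
        rw [hk1, show j₀ - 1 + 1 = j₀ by omega]
        rcases Nat.eq_or_lt_of_le hj₀1 with h | h
        · rw [show ent T j₀ j₀ = sfun T j₀ - sfun T (j₀ - 1) from hstep j₀ hj₀1, hj₀δ,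
            hzero (j₀-1) (by omega) (by omega)]
          ring
        · rw [hstep j₀ (by omega), hj₀δ, hzero (j₀-1) (by omega) (by omega)]; ring
      have e2 : ent T k k = 0 := by
        rw [hk1]
        rcases Nat.lt_or_ge 1 j₀ with h | h
        · rw [hstep (j₀-1) (by omega), hzero (j₀-1) (by omega) (by omega),
            hzero (j₀-1-1) (by omega) (by omega)]
          ring
        · have : j₀ = 1 := by omega
          rw [this]
          show ent T 0 0 = 0
          have := hzero 0 (by omega) (by omega)
          rw [sfun] at this
          simpa using this
      rw [e1, e2]
      exact hδ
  refine ⟨T₂, P, Pi, hPPi, hPiP, hT₂, hUT₂, ?_⟩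
  apply goodW_of_index T₂ j₀ hj₀lt
  · rw [hsj₂]
    exact hj₀ne
  · rw [hsj₂, hδ₂, hj₀δ]
    intro hc
    exact hlamne (by linear_combination -hc)

end Good


section Schur
variable [IsAlgClosed K]

/-- embed an n×n matrix into the lower-right corner of an (n+1)×(n+1) matrix,
with a 1 in the top-left corner -/
def lift1 (M : Matrix (Fin n) (Fin n) K) : Matrix (Fin (n+1)) (Fin (n+1)) K :=
  Matrix.of fun i j =>
    if hi : i = 0 then (if j = 0 then 1 else 0)
    else if hj : j = 0 then 0 else M (i.pred hi) (j.pred hj)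

lemma lift1_zero_zero (M : Matrix (Fin n) (Fin n) K) : lift1 M 0 0 = 1 := by
  simp [lift1]

lemma lift1_zero_succ (M : Matrix (Fin n) (Fin n) K) (j : Fin n) :
    lift1 M 0 j.succ = 0 := by
  simp [lift1, Fin.succ_ne_zero]

lemma lift1_succ_zero (M : Matrix (Fin n) (Fin n) K) (i : Fin n) :
    lift1 M i.succ 0 = 0 := by
  simp [lift1, Fin.succ_ne_zero]

lemma lift1_succ_succ (M : Matrix (Fin n) (Fin n) K) (i j : Fin n) :
    lift1 M i.succ j.succ = M i j := by
  simp [lift1, Fin.succ_ne_zero]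

lemma lift1_mul (A B : Matrix (Fin n) (Fin n) K) :
    lift1 A * lift1 B = lift1 (A * B) := by
  ext i j
  rw [mul_apply, Fin.sum_univ_succ]
  induction i using Fin.cases with
  | zero =>
    induction j using Fin.cases with
    | zero =>
      rw [lift1_zero_zero, lift1_zero_zero, lift1_zero_zero, one_mul,
        Finset.sum_eq_zero (fun k _ => by rw [lift1_zero_succ, zero_mul])]
      ring
    | succ j =>
      rw [lift1_zero_zero, lift1_zero_succ, lift1_zero_succ, one_mul,
        Finset.sum_eq_zero (fun k _ => by rw [lift1_zero_succ, zero_mul])]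
      ring
  | succ i =>
    induction j using Fin.cases with
    | zero =>
      rw [lift1_succ_zero, lift1_succ_zero, lift1_zero_zero,
        Finset.sum_eq_zero (fun k _ => by rw [lift1_succ_zero, mul_zero])]
      ring
    | succ j =>
      rw [lift1_succ_zero, lift1_zero_succ, lift1_succ_succ, mul_apply, zero_mul, zero_add]
      apply Finset.sum_congr rfl
      intro k _
      rw [lift1_succ_succ, lift1_succ_succ]

lemma lift1_one : lift1 (1 : Matrix (Fin n) (Fin n) K) = 1 := by
  ext i j
  induction i using Fin.cases with
  | zero =>
    induction j using Fin.cases with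
    | zero => rw [lift1_zero_zero, Matrix.one_apply_eq]
    | succ j =>
      rw [lift1_zero_succ, Matrix.one_apply_ne (fun hc => (Fin.succ_ne_zero j) hc.symm)]
  | succ i =>
    induction j using Fin.cases with
    | zero => rw [lift1_succ_zero, Matrix.one_apply_ne (Fin.succ_ne_zero i)]
    | succ j =>
      rw [lift1_succ_succ]
      by_cases h : i = j
      · subst h; rw [Matrix.one_apply_eq, Matrix.one_apply_eq]
      · rw [Matrix.one_apply_ne h, Matrix.one_apply_ne (fun hc => h (by
          exact Fin.succ_injective _ hc))]

/-- Schur triangularization over an algebraically closed field. -/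
theorem schur (m : ℕ) (D : Matrix (Fin m) (Fin m) K) :
    ∃ P Pi T : Matrix (Fin m) (Fin m) K, P * Pi = 1 ∧ Pi * P = 1 ∧ D = P * T * Pi ∧
      ∀ i j : Fin m, (j:ℕ) < (i:ℕ) → T i j = 0 := by
  induction m with
  | zero =>
    exact ⟨1, 1, D, by rw [one_mul], by rw [one_mul],
      by rw [one_mul, mul_one], fun i j _ => absurd i.isLt (by omega)⟩
  | succ m ih =>
    -- find an eigenvector
    obtain ⟨μ, hμ⟩ := Module.End.exists_eigenvalue
      (Matrix.toLin' D : Module.End K (Fin (m+1) → K))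
    obtain ⟨v, hv⟩ := hμ.exists_hasEigenvector
    have hDv : D *ᵥ v = μ • v := by
      rw [← Matrix.toLin'_apply]; exact hv.apply_eq_smul
    obtain ⟨i₀, hi₀⟩ : ∃ i, v i ≠ 0 := Function.ne_iff.mp hv.2
    set R : Matrix (Fin (m+1)) (Fin (m+1)) K := (1 : Matrix _ _ K).updateCol i₀ v with hR
    have hdet : IsUnit R.det := by
      rw [hR, ← Matrix.cramer_apply, Matrix.cramer_one]
      simpa using isUnit_iff_ne_zero.mpr hi₀
    have hRR : R * R⁻¹ = 1 := Matrix.mul_nonsing_inv R hdet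
    have hRiR : R⁻¹ * R = 1 := Matrix.nonsing_inv_mul R hdet
    have hRe : R *ᵥ Pi.single i₀ (1:K) = v := by
      rw [Matrix.mulVec_single_one]
      funext i
      simp only [Matrix.col, Matrix.transpose_apply]
      rw [hR, Matrix.updateCol_self]
    set D₁ : Matrix (Fin (m+1)) (Fin (m+1)) K := R⁻¹ * D * R with hD₁
    have hcol : ∀ i, D₁ i i₀ = if i = i₀ then μ else 0 := by
      have h1 : D₁ *ᵥ Pi.single i₀ (1:K) = μ • (Pi.single i₀ (1:K) : Fin (m+1) → K) := by
        rw [hD₁, ← Matrix.mulVec_mulVec, ← Matrix.mulVec_mulVec, hRe, hDv,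
          Matrix.mulVec_smul, ← hRe, Matrix.mulVec_mulVec, hRiR, Matrix.one_mulVec]
      intro i
      have h2 := congrFun h1 i
      rw [Matrix.mulVec_single_one] at h2
      simp only [Matrix.col, Matrix.transpose_apply] at h2
      rw [h2, Pi.smul_apply, Pi.single_apply]
      by_cases h : i = i₀
      · rw [if_pos h, if_pos h, smul_eq_mul, mul_one]
      · rw [if_neg h, if_neg h, smul_eq_mul, mul_zero]
    -- permute index i₀ to 0
    set σ : Equiv.Perm (Fin (m+1)) := Equiv.swap 0 i₀ with hσ
    have hinv : ∀ x, σ (σ x) = x := fun x => Equiv.swap_apply_self _ _ x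
    obtain ⟨Q, hQQ, hQent⟩ := perm_conj D₁ σ hinv
    set D₂ : Matrix (Fin (m+1)) (Fin (m+1)) K := Q * D₁ * Q with hD₂
    have hσ0 : σ 0 = i₀ := Equiv.swap_apply_left 0 i₀
    have hcol₂ : ∀ i, D₂ i 0 = if i = 0 then μ else 0 := by
      intro i
      rw [hQent, hσ0, hcol]
      by_cases h : i = 0
      · subst h; rw [if_pos hσ0, if_pos rfl]
      · rw [if_neg (fun hc : σ i = i₀ => h (by
          have h5 := congrArg σ hc
          rw [hinv, ← hσ0, hinv] at h5
          exact h5)), if_neg h]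
    -- inductive step on the lower-right block
    set D₃ : Matrix (Fin m) (Fin m) K := Matrix.of fun i j => D₂ i.succ j.succ with hD₃
    obtain ⟨P₃, Pi₃, T₃, h31, h32, h33, h3up⟩ := ih D₃
    have hPDP : Pi₃ * D₃ * P₃ = T₃ := by
      rw [h33, show Pi₃ * (P₃ * T₃ * Pi₃) * P₃ = (Pi₃ * P₃) * T₃ * (Pi₃ * P₃) by
        simp only [mul_assoc], h32, one_mul, mul_one]
    set U : Matrix (Fin (m+1)) (Fin (m+1)) K := lift1 Pi₃ * D₂ * lift1 P₃ with hU
    have hU0 : ∀ j : Fin (m+1), (lift1 Pi₃ * D₂) j 0 = if j = 0 then μ else 0 := by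
      intro j
      rw [mul_apply,
        Finset.sum_congr rfl (fun k (_ : k ∈ Finset.univ) => by rw [hcol₂ k]),
        Fin.sum_univ_succ, if_pos rfl,
        Finset.sum_eq_zero (fun k _ => by rw [if_neg (Fin.succ_ne_zero k), mul_zero]),
        add_zero]
      induction j using Fin.cases with
      | zero => rw [lift1_zero_zero, one_mul, if_pos rfl]
      | succ j => rw [lift1_succ_zero, zero_mul, if_neg (Fin.succ_ne_zero j)]
    have hblock : ∀ (i : Fin m) (k : Fin m),
        (lift1 Pi₃ * D₂) i.succ k.succ = (Pi₃ * D₃) i k := by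
      intro i k
      rw [mul_apply, Fin.sum_univ_succ, lift1_succ_zero, zero_mul, zero_add, mul_apply]
      apply Finset.sum_congr rfl
      intro l _
      rw [lift1_succ_succ, hD₃]
      rfl
    have hs : ∀ (i : Fin m) (j : Fin m), U i.succ j.succ = (Pi₃ * D₃ * P₃) i j := by
      intro i j
      rw [hU, mul_apply, Fin.sum_univ_succ, lift1_zero_succ, mul_zero, zero_add,
        Finset.sum_congr rfl (fun k (_ : k ∈ Finset.univ) => by
          rw [hblock i k, lift1_succ_succ])]
      exact (Matrix.mul_apply).symm
    have hUup : ∀ i j : Fin (m+1), (j:ℕ) < (i:ℕ) → U i j = 0 := by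
      intro i j hij
      induction i using Fin.cases with
      | zero =>
        rw [Fin.val_zero] at hij
        exact absurd hij (Nat.not_lt_zero _)
      | succ i =>
        induction j using Fin.cases with
        | zero =>
          rw [hU, mul_apply, Finset.sum_eq_single_of_mem 0 (Finset.mem_univ _)
            (fun b _ hb => by
              induction b using Fin.cases with
              | zero => exact absurd rfl hb
              | succ b => rw [lift1_succ_zero, mul_zero])]
          rw [hU0, if_neg (Fin.succ_ne_zero i), zero_mul]
        | succ j =>
          rw [hs, hPDP]
          apply h3up
          simp only [Fin.val_succ] at hij
          omega
    have hD₂U : D₂ = lift1 P₃ * U * lift1 Pi₃ := by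
      rw [hU, show lift1 P₃ * (lift1 Pi₃ * D₂ * lift1 P₃) * lift1 Pi₃
          = (lift1 P₃ * lift1 Pi₃) * D₂ * (lift1 P₃ * lift1 Pi₃) by simp only [mul_assoc],
        lift1_mul, h31, lift1_one, one_mul, mul_one]
    have hD₁D : D = R * D₁ * R⁻¹ := by
      rw [hD₁, show R * (R⁻¹ * D * R) * R⁻¹ = (R * R⁻¹) * D * (R * R⁻¹) by
        simp only [mul_assoc], hRR, one_mul, mul_one]
    have hD₁Q : D₁ = Q * D₂ * Q := by
      rw [hD₂, show Q * (Q * D₁ * Q) * Q = (Q * Q) * D₁ * (Q * Q) by simp only [mul_assoc],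
        hQQ, one_mul, mul_one]
    refine ⟨R * Q * lift1 P₃, lift1 Pi₃ * Q * R⁻¹, U, ?_, ?_, ?_, hUup⟩
    · rw [show R * Q * lift1 P₃ * (lift1 Pi₃ * Q * R⁻¹)
          = R * (Q * ((lift1 P₃ * lift1 Pi₃) * Q)) * R⁻¹ by simp only [mul_assoc],
        lift1_mul, h31, lift1_one, one_mul, hQQ, mul_one, hRR]
    · rw [show lift1 Pi₃ * Q * R⁻¹ * (R * Q * lift1 P₃)
          = lift1 Pi₃ * (Q * ((R⁻¹ * R) * Q)) * lift1 P₃ by simp only [mul_assoc],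
        hRiR, one_mul, hQQ, mul_one, lift1_mul, h32, lift1_one]
    · rw [hD₁D, hD₁Q, hD₂U]
      simp only [mul_assoc]

end Schur

end Stmt4Aux

open Stmt4Aux

theorem stmt_4 (K : Type*) [Field K] [IsAlgClosed K] [CharZero K] (n : ℕ) (hn : 3 ≤ n)
    (D : Matrix (Fin n) (Fin n) K) (hD : Matrix.trace D = 0) :
    ∃ A B C : Matrix (Fin n) (Fin n) K,
      D = (A * B - B * A) * (A * C - C * A) - (A * C - C * A) * (A * B - B * A) := by
  obtain ⟨P, Pinv, T, hPPi, hPiP, hDT, hUT⟩ := Stmt4Aux.schur n D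
  have htrT : Matrix.trace T = 0 := by
    have h1 : Matrix.trace D = Matrix.trace T := by
      rw [hDT, show P * T * Pinv = P * (T * Pinv) by rw [mul_assoc],
        Matrix.trace_mul_comm, mul_assoc, hPiP, mul_one]
    rw [← h1, hD]
  obtain ⟨T₂, P₂, Pi₂, h21, h22, hT₂, hUT₂, hgood⟩ := upper_good hn T hUT htrT
  obtain ⟨g, hg, hsum⟩ := hgood
  have htrT₂ : Matrix.trace T₂ = 0 := by
    rw [hT₂, show P₂ * T * Pi₂ = P₂ * (T * Pi₂) by rw [mul_assoc],
      Matrix.trace_mul_comm, mul_assoc, h22, mul_one, htrT]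
  obtain ⟨A, B, C, hABC⟩ := core (show 0 < n by omega) T₂ hUT₂ htrT₂ g hg hsum
  set Q : Matrix (Fin n) (Fin n) K := P * Pi₂ with hQ
  set Qi : Matrix (Fin n) (Fin n) K := P₂ * Pinv with hQi
  have hQQi : Q * Qi = 1 := by
    rw [hQ, hQi, show P * Pi₂ * (P₂ * Pinv) = P * ((Pi₂ * P₂) * Pinv) by
      simp only [mul_assoc], h22, one_mul, hPPi]
  have hQiQ : Qi * Q = 1 := by
    rw [hQ, hQi, show P₂ * Pinv * (P * Pi₂) = P₂ * ((Pinv * P) * Pi₂) by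
      simp only [mul_assoc], hPiP, one_mul, h21]
  have br : ∀ U V : Matrix (Fin n) (Fin n) K,
      (Q*U*Qi)*(Q*V*Qi) - (Q*V*Qi)*(Q*U*Qi) = Q * (U*V - V*U) * Qi := by
    intro U V
    rw [conj_mul hQiQ U V, conj_mul hQiQ V U, Matrix.mul_sub, Matrix.sub_mul]
  refine ⟨Q * A * Qi, Q * B * Qi, Q * C * Qi, ?_⟩
  rw [br A B, br A C, br (A*B - B*A) (A*C - C*A), ← hABC]
  rw [hDT, hT₂, show Q * (P₂ * T * Pi₂) * Qi = P * ((Pi₂ * P₂) * T * (Pi₂ * P₂)) * Pinv by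
    rw [hQ, hQi]; simp only [mul_assoc], h22, one_mul, mul_one]
end

section
/- Let K be a field, n ≥ 2 and m ≥ 2 integers such that char(K) does not divide n, and let f(x₁,…,x_m) be a nonzero multilinear polynomial in the free algebra K⟨x₁,…,x_m⟩. If n ≥ (m+1)/2, then the K-linear span of the image f(M_n(K)) contains sl_n(K). -/
open Matrix

/-- Evaluation of the multilinear polynomial `∑_{σ ∈ S_m} α_σ x_{σ(1)} ⋯ x_{σ(m)}`
at a tuple of elements of an algebra. -/
def mlEval {K : Type*} [Field K] {R : Type*} [Ring R] [Algebra K R] {m : ℕ}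
    (α : Equiv.Perm (Fin m) → K) (a : Fin m → R) : R :=
  ∑ σ : Equiv.Perm (Fin m), α σ • (List.ofFn fun i => a (σ i)).prod

section Aux

variable {K : Type*} [Field K] {n : ℕ}

/-- Product of a list of elementary matrices. -/
lemma prodE_list (l : List (Fin n × Fin n)) (h : l ≠ []) :
    (l.map fun e => Matrix.single e.1 e.2 (1:K)).prod =
      if l.IsChain (fun e f => e.2 = f.1)
      then Matrix.single (l.head h).1 (l.getLast h).2 (1:K) else 0 := by
  induction l with
  | nil => simp at h
  | cons a l ih =>
    cases l with
    | nil => simp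
    | cons b t =>
      have hbt : (b :: t) ≠ [] := by simp
      rw [List.map_cons, List.prod_cons, ih hbt]
      by_cases hch : (b :: t).IsChain (fun e f => e.2 = f.1)
      · rw [if_pos hch]
        have hhead : (b :: t).head hbt = b := rfl
        rw [hhead]
        by_cases hab : a.2 = b.1
        · have : (a :: b :: t).IsChain (fun e f => e.2 = f.1) := List.IsChain.cons_cons hab hch
          rw [if_pos this]
          rw [hab, Matrix.single_mul_single_same, one_mul]
          congr 1
        · have : ¬ (a :: b :: t).IsChain (fun e f => e.2 = f.1) := by
            intro hc
            exact hab (List.isChain_cons_cons.mp hc).1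
          rw [if_neg this, Matrix.single_mul_single_of_ne (h := hab)]
      · rw [if_neg hch, mul_zero, if_neg]
        intro hc
        exact hch (List.isChain_cons_cons.mp hc).2

/-- A permutation satisfying the chain condition is the identity. -/
lemma perm_eq_one {m : ℕ} (hm : 2 ≤ m) (σ : Equiv.Perm (Fin m))
    (h : ∀ i : ℕ, ∀ hi : i + 1 < m,
      ((σ ⟨i, by omega⟩ : Fin m).val + 1) / 2 = (σ ⟨i + 1, hi⟩ : Fin m).val / 2) :
    σ = 1 := by
  have step : ∀ i : ℕ, ∀ hi : i + 1 < m,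
      (σ ⟨i, by omega⟩ : Fin m).val < (σ ⟨i + 1, hi⟩ : Fin m).val := by
    intro i hi
    have hne : (σ ⟨i, by omega⟩ : Fin m) ≠ σ ⟨i + 1, hi⟩ := by
      intro hc
      have := σ.injective hc
      simp [Fin.ext_iff] at this
    have hne' : (σ ⟨i, by omega⟩ : Fin m).val ≠ (σ ⟨i + 1, hi⟩ : Fin m).val := by
      exact fun hc => hne (Fin.ext hc)
    have := h i hi
    omega
  have hle : ∀ i : ℕ, ∀ hi : i < m, i ≤ (σ ⟨i, hi⟩ : Fin m).val := by
    intro i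
    induction i with
    | zero => intro _; omega
    | succ k ihk =>
      intro hi
      have h1 := ihk (by omega)
      have h2 := step k hi
      omega
  have hsum : ∑ i : Fin m, ((σ i : Fin m).val) = ∑ i : Fin m, i.val :=
    Equiv.sum_comp σ (fun i => i.val)
  have hpt : ∀ i : Fin m, i.val = (σ i : Fin m).val := by
    have := (Finset.sum_eq_sum_iff_of_le (s := Finset.univ)
      (f := fun i : Fin m => i.val) (g := fun i => (σ i : Fin m).val)
      (fun i _ => hle i.val i.isLt)).mp (by rw [hsum])
    intro i; exact this i (Finset.mem_univ i)
  ext i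
  exact (hpt i).symm

end Aux
section Key

variable {K : Type*} [Field K] {n m : ℕ}

lemma chain'_ofFn_iff {β : Type*} {k : ℕ} (R : β → β → Prop) (g : Fin k → β) :
    (List.ofFn g).IsChain R ↔ ∀ i : ℕ, ∀ hi : i + 1 < k, R (g ⟨i, by omega⟩) (g ⟨i + 1, hi⟩) := by
  rw [List.isChain_iff_getElem]
  constructor
  · intro hc i hi
    have := hc i (by simp; omega)
    simpa [List.get_ofFn, Fin.cast_mk] using this
  · intro hP i hi
    simp only [List.length_ofFn] at hi
    simp only [List.getElem_ofFn]
    exact hP i (by omega)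

lemma prodE_of_chain (l : List (Fin n × Fin n)) (h : l ≠ [])
    (hc : l.IsChain (fun e f => e.2 = f.1)) :
    (l.map fun e => Matrix.single e.1 e.2 (1:K)).prod =
      Matrix.single (l.head h).1 (l.getLast h).2 (1:K) := by
  rw [prodE_list l h, if_pos hc]

lemma prodE_of_not_chain (l : List (Fin n × Fin n)) (h : l ≠ [])
    (hc : ¬ l.IsChain (fun e f => e.2 = f.1)) :
    (l.map fun e => Matrix.single e.1 e.2 (1:K)).prod = 0 := by
  rw [prodE_list l h, if_neg hc]

lemma prod_walk (hn : 2 ≤ n) (hm : 2 ≤ m) (hb : m + 1 ≤ 2 * n)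
    (τ : Equiv.Perm (Fin n)) (σ : Equiv.Perm (Fin m)) :
    (List.ofFn fun i : Fin m =>
        Matrix.single (τ ⟨(σ i).val / 2, by omega⟩)
          (τ ⟨((σ i).val + 1) / 2, by omega⟩) (1:K)).prod =
      if σ = 1 then Matrix.single (τ ⟨0, by omega⟩) (τ ⟨m / 2, by omega⟩) (1:K) else 0 := by
  set g : Fin m → Fin n × Fin n := fun i =>
    ((τ ⟨(σ i).val / 2, by omega⟩ : Fin n), (τ ⟨((σ i).val + 1) / 2, by omega⟩ : Fin n)) with hg
  have hmap : (List.ofFn fun i : Fin m =>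
        Matrix.single (τ ⟨(σ i).val / 2, by omega⟩)
          (τ ⟨((σ i).val + 1) / 2, by omega⟩) (1:K)) =
      (List.ofFn g).map (fun e => Matrix.single e.1 e.2 (1:K)) := by
    rw [List.map_ofFn]; rfl
  have hne : List.ofFn g ≠ [] := by
    apply List.ne_nil_of_length_pos
    rw [List.length_ofFn]; omega
  rw [hmap]
  by_cases hσ : σ = 1
  · rw [if_pos hσ]
    have hc : (List.ofFn g).IsChain (fun e f => e.2 = f.1) := by
      rw [chain'_ofFn_iff]
      intro i hi
      simp only [hg, hσ, Equiv.Perm.one_apply]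
    rw [prodE_of_chain _ hne hc, List.head_ofFn, List.getLast_ofFn]
    simp only [hg, hσ, Equiv.Perm.one_apply]
    have e1 : ((0 : ℕ) / 2 : ℕ) = 0 := rfl
    have e2 : ((m - 1 + 1) / 2 : ℕ) = m / 2 := by omega
    simp only [e1, e2]
  · rw [if_neg hσ]
    apply prodE_of_not_chain _ hne
    intro hc
    rw [chain'_ofFn_iff] at hc
    apply hσ
    apply perm_eq_one hm σ
    intro i hi
    have h1 := hc i hi
    simp only [hg] at h1
    have h2 := τ.injective h1
    simpa [Fin.mk.injEq] using h2

end Key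

section
variable {K : Type*} [Field K] {n m : ℕ}

lemma mlEval_walk (hn : 2 ≤ n) (hm : 2 ≤ m) (hb : m + 1 ≤ 2 * n)
    (α : Equiv.Perm (Fin m) → K) (τ : Equiv.Perm (Fin n)) :
    mlEval α (fun i : Fin m =>
        Matrix.single (τ ⟨i.val / 2, by omega⟩) (τ ⟨(i.val + 1) / 2, by omega⟩) (1:K)) =
      α 1 • Matrix.single (τ ⟨0, by omega⟩) (τ ⟨m / 2, by omega⟩) (1:K) := by
  have key : ∀ σ : Equiv.Perm (Fin m), α σ • (List.ofFn fun i : Fin m =>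
      Matrix.single (τ ⟨(σ i).val / 2, by omega⟩)
        (τ ⟨((σ i).val + 1) / 2, by omega⟩) (1:K)).prod
      = if σ = 1 then α σ • Matrix.single (τ ⟨0, by omega⟩) (τ ⟨m / 2, by omega⟩) (1:K)
        else 0 := by
    intro σ
    rw [prod_walk hn hm hb τ σ]
    split <;> simp
  rw [mlEval]
  refine Eq.trans (Finset.sum_congr rfl fun σ _ => key σ) ?_
  rw [Finset.sum_ite_eq']
  simp

end

section Conj

variable {K : Type*} [Field K] {n m : ℕ}

lemma conj_list {R : Type*} [Ring R] (g gi : R) (h1 : g * gi = 1) (h2 : gi * g = 1)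
    (l : List R) : (l.map fun x => g * x * gi).prod = g * l.prod * gi := by
  induction l with
  | nil => simp [h1]
  | cons a t ih =>
    rw [List.map_cons, List.prod_cons, ih, List.prod_cons]
    calc (g * a * gi) * (g * t.prod * gi) = g * (a * ((gi * g) * (t.prod * gi))) := by
          simp only [mul_assoc]
      _ = g * (a * t.prod) * gi := by rw [h2, one_mul, mul_assoc, mul_assoc]

lemma mlEval_conj {R : Type*} [Ring R] [Algebra K R] (α : Equiv.Perm (Fin m) → K)
    (g gi : R) (h1 : g * gi = 1) (h2 : gi * g = 1) (a : Fin m → R) :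
    mlEval α (fun i => g * a i * gi) = g * mlEval α a * gi := by
  rw [mlEval, mlEval, Finset.mul_sum, Finset.sum_mul]
  refine Finset.sum_congr rfl fun σ _ => ?_
  rw [mul_smul_comm, smul_mul_assoc]
  congr 1
  have hmap : (List.ofFn fun i => g * a (σ i) * gi) =
      (List.ofFn fun i => a (σ i)).map (fun x => g * x * gi) := by
    rw [List.map_ofFn]; rfl
  rw [hmap, conj_list g gi h1 h2]

lemma span_conj (α : Equiv.Perm (Fin m) → K)
    (g gi : Matrix (Fin n) (Fin n) K) (h1 : g * gi = 1) (h2 : gi * g = 1)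
    {X : Matrix (Fin n) (Fin n) K}
    (hX : X ∈ Submodule.span K
      {X : Matrix (Fin n) (Fin n) K | ∃ a : Fin m → Matrix (Fin n) (Fin n) K, X = mlEval α a}) :
    g * X * gi ∈ Submodule.span K
      {X : Matrix (Fin n) (Fin n) K | ∃ a : Fin m → Matrix (Fin n) (Fin n) K, X = mlEval α a} := by
  induction hX using Submodule.span_induction with
  | mem x hx =>
    obtain ⟨a, rfl⟩ := hx
    refine Submodule.subset_span ⟨fun i => g * a i * gi, ?_⟩
    rw [mlEval_conj α g gi h1 h2 a]
  | zero => simp only [mul_zero, zero_mul]; exact Submodule.zero_mem _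
  | add x y hx hy ihx ihy =>
    have : g * (x + y) * gi = g * x * gi + g * y * gi := by
      rw [mul_add, add_mul]
    rw [this]; exact Submodule.add_mem _ ihx ihy
  | smul c x hx ih =>
    have : g * (c • x) * gi = c • (g * x * gi) := by
      rw [mul_smul_comm, smul_mul_assoc]
    rw [this]; exact Submodule.smul_mem _ c ih

end Conj

section MainAux

variable {K : Type*} [Field K] {n m : ℕ}

lemma unit_mem (hn : 2 ≤ n) (hm : 2 ≤ m) (hb : m + 1 ≤ 2 * n)
    (α : Equiv.Perm (Fin m) → K) (hα1 : α 1 ≠ 0) (p q : Fin n) (hpq : p ≠ q) :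
    Matrix.single p q (1:K) ∈ Submodule.span K
      {X : Matrix (Fin n) (Fin n) K | ∃ a : Fin m → Matrix (Fin n) (Fin n) K, X = mlEval α a} := by
  have hz : (0:ℕ) < n := by omega
  have hw : m / 2 < n := by omega
  set z : Fin n := ⟨0, hz⟩ with hzdef
  set w : Fin n := ⟨m / 2, hw⟩ with hwdef
  have hzw : z ≠ w := by
    simp only [hzdef, hwdef, ne_eq, Fin.mk.injEq]
    omega
  set e : Equiv.Perm (Fin n) := Equiv.swap z p with hedef
  have heq : e z = p := Equiv.swap_apply_left z p
  have hzq : z ≠ e.symm q := by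
    intro hc
    apply hpq
    rw [← heq, hc, Equiv.apply_symm_apply]
  set τ : Equiv.Perm (Fin n) := (Equiv.swap w (e.symm q)).trans e with hτdef
  have hτz : τ z = p := by
    rw [hτdef, Equiv.trans_apply, Equiv.swap_apply_of_ne_of_ne hzw hzq, heq]
  have hτw : τ w = q := by
    rw [hτdef, Equiv.trans_apply, Equiv.swap_apply_left, Equiv.apply_symm_apply]
  have hwalk := mlEval_walk hn hm hb α τ
  have hmemS : mlEval α (fun i : Fin m =>
      Matrix.single (τ ⟨i.val / 2, by omega⟩) (τ ⟨(i.val + 1) / 2, by omega⟩) (1:K)) ∈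
      Submodule.span K
        {X : Matrix (Fin n) (Fin n) K |
          ∃ a : Fin m → Matrix (Fin n) (Fin n) K, X = mlEval α a} :=
    Submodule.subset_span ⟨_, rfl⟩
  have h2 := Submodule.smul_mem _ (α 1)⁻¹ hmemS
  rw [hwalk, smul_smul, inv_mul_cancel₀ hα1, one_smul] at h2
  have hz' : (⟨0, by omega⟩ : Fin n) = z := rfl
  have hw' : (⟨m / 2, by omega⟩ : Fin n) = w := rfl
  rwa [hz', hw', hτz, hτw] at h2

lemma diag_mem (hn : 2 ≤ n) (hm : 2 ≤ m) (hb : m + 1 ≤ 2 * n)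
    (α : Equiv.Perm (Fin m) → K) (hα1 : α 1 ≠ 0) (p q : Fin n) (hpq : p ≠ q) :
    Matrix.single q q (1:K) - Matrix.single p p (1:K) ∈ Submodule.span K
      {X : Matrix (Fin n) (Fin n) K | ∃ a : Fin m → Matrix (Fin n) (Fin n) K, X = mlEval α a} := by
  set A : Matrix (Fin n) (Fin n) K := Matrix.single q p (1:K) with hA
  have hAA : A * A = 0 := by rw [hA]; exact Matrix.single_mul_single_of_ne (h := hpq) ..
  have h1 : (1 + A) * (1 - A) = 1 := by
    rw [mul_sub, mul_one, add_mul, one_mul, hAA, add_zero]; abel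
  have h2 : (1 - A) * (1 + A) = 1 := by
    rw [sub_mul, one_mul, mul_add, mul_one, hAA, add_zero]; abel
  have hEpq := unit_mem hn hm hb α hα1 p q hpq
  have hEqp := unit_mem hn hm hb α hα1 q p (Ne.symm hpq)
  have hconj := span_conj α (1 + A) (1 - A) h1 h2 hEpq
  have hcalc : (1 + A) * Matrix.single p q (1:K) * (1 - A) =
      Matrix.single p q (1:K) + Matrix.single q q (1:K)
        - Matrix.single p p (1:K) - A := by
    have e1 : A * Matrix.single p q (1:K) = Matrix.single q q (1:K) := by
      rw [hA, Matrix.single_mul_single_same, one_mul]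
    have e2 : Matrix.single p q (1:K) * A = Matrix.single p p (1:K) := by
      rw [hA, Matrix.single_mul_single_same, one_mul]
    have e3 : Matrix.single q q (1:K) * A = A := by
      rw [hA, Matrix.single_mul_single_same, one_mul]
    rw [add_mul, one_mul, e1, mul_sub, mul_one, add_mul, e2, e3]
    abel
  rw [hcalc] at hconj
  have hfinal := Submodule.sub_mem _ (Submodule.add_mem _ hconj hEqp) hEpq
  have : Matrix.single p q (1:K) + Matrix.single q q (1:K)
      - Matrix.single p p (1:K) - A + A - Matrix.single p q (1:K) =
      Matrix.single q q (1:K) - Matrix.single p p (1:K) := by abel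
  rwa [this] at hfinal

lemma main_aux (hn : 2 ≤ n) (hm : 2 ≤ m) (hb : m + 1 ≤ 2 * n)
    (α : Equiv.Perm (Fin m) → K) (hα1 : α 1 ≠ 0)
    (D : Matrix (Fin n) (Fin n) K) (hD : Matrix.trace D = 0) :
    D ∈ Submodule.span K
        {X : Matrix (Fin n) (Fin n) K |
          ∃ a : Fin m → Matrix (Fin n) (Fin n) K, X = mlEval α a} := by
  set z : Fin n := ⟨0, by omega⟩ with hzdef
  have htr : ∑ i : Fin n, D i i = 0 := by
    simpa [Matrix.trace, Matrix.diag] using hD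
  have hdecomp : D =
      (∑ p : Fin n, ∑ q : Fin n,
        if p = q then (0 : Matrix (Fin n) (Fin n) K) else D p q • Matrix.single p q (1:K))
      + ∑ p : Fin n, D p p • (Matrix.single p p (1:K) - Matrix.single z z (1:K)) := by
    have hfull : D = ∑ p : Fin n, ∑ q : Fin n, D p q • Matrix.single p q (1:K) := by
      conv_lhs => rw [Matrix.matrix_eq_sum_single D]
      refine Finset.sum_congr rfl fun p _ => Finset.sum_congr rfl fun q _ => ?_
      rw [Matrix.smul_single, smul_eq_mul, mul_one]
    have hrow : ∀ p : Fin n, (∑ q : Fin n,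
        if p = q then (0 : Matrix (Fin n) (Fin n) K) else D p q • Matrix.single p q (1:K)) =
        (∑ q : Fin n, D p q • Matrix.single p q (1:K)) - D p p • Matrix.single p p (1:K) := by
      intro p
      have hsplit : ∀ q : Fin n,
          (if p = q then (0 : Matrix (Fin n) (Fin n) K) else D p q • Matrix.single p q (1:K)) =
          D p q • Matrix.single p q (1:K) -
            (if p = q then D p q • Matrix.single p q (1:K) else 0) := by
        intro q; split <;> simp
      rw [Finset.sum_congr rfl fun q _ => hsplit q, Finset.sum_sub_distrib,
        Finset.sum_ite_eq, if_pos (Finset.mem_univ p)]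
    have hlast : ∑ p : Fin n, D p p • (Matrix.single p p (1:K) - Matrix.single z z (1:K)) =
        (∑ p : Fin n, D p p • Matrix.single p p (1:K)) -
          (∑ p : Fin n, D p p) • Matrix.single z z (1:K) := by
      rw [Finset.sum_smul, ← Finset.sum_sub_distrib]
      refine Finset.sum_congr rfl fun p _ => ?_
      rw [smul_sub]
    rw [Finset.sum_congr rfl fun p _ => hrow p, Finset.sum_sub_distrib, hlast, htr, zero_smul,
      sub_zero, ← hfull]
    abel
  rw [hdecomp]
  refine Submodule.add_mem _ ?_ ?_
  · refine Submodule.sum_mem _ fun p _ => Submodule.sum_mem _ fun q _ => ?_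
    by_cases hpq : p = q
    · rw [if_pos hpq]; exact Submodule.zero_mem _
    · rw [if_neg hpq]
      exact Submodule.smul_mem _ _ (unit_mem hn hm hb α hα1 p q hpq)
  · refine Submodule.sum_mem _ fun p _ => ?_
    by_cases hp : p = z
    · rw [hp, sub_self, smul_zero]; exact Submodule.zero_mem _
    · exact Submodule.smul_mem _ _ (diag_mem hn hm hb α hα1 z p (fun hc => hp hc.symm))

end MainAux

section Reindex

variable {K : Type*} [Field K] {m : ℕ}

lemma mlEval_comp {R : Type*} [Ring R] [Algebra K R] (α : Equiv.Perm (Fin m) → K)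
    (ρ : Equiv.Perm (Fin m)) (b : Fin m → R) :
    mlEval α (fun j => b (ρ j)) = mlEval (fun τ => α (ρ⁻¹ * τ)) b := by
  rw [mlEval, mlEval]
  rw [← Equiv.sum_comp (Equiv.mulLeft ρ)
    (fun τ => α (ρ⁻¹ * τ) • (List.ofFn fun i => b (τ i)).prod)]
  refine Finset.sum_congr rfl fun σ _ => ?_
  simp only [Equiv.coe_mulLeft]
  rw [inv_mul_cancel_left]
  congr 1

end Reindex

theorem stmt_7 (K : Type*) [Field K] (n m : ℕ) (hn : 2 ≤ n) (hm : 2 ≤ m)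
    (hchar : (n : K) ≠ 0) (hbound : m + 1 ≤ 2 * n)
    (α : Equiv.Perm (Fin m) → K) (hα : α ≠ 0)
    (D : Matrix (Fin n) (Fin n) K) (hD : Matrix.trace D = 0) :
    D ∈ Submodule.span K
        {X : Matrix (Fin n) (Fin n) K |
          ∃ a : Fin m → Matrix (Fin n) (Fin n) K, X = mlEval α a} := by
  obtain ⟨σ₀, hσ₀⟩ := Function.ne_iff.mp hα
  set ρ : Equiv.Perm (Fin m) := σ₀⁻¹ with hρ
  set β : Equiv.Perm (Fin m) → K := fun τ => α (ρ⁻¹ * τ) with hβ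
  have hβ1 : β 1 ≠ 0 := by
    simpa [hβ, hρ] using hσ₀
  have hsets : {X : Matrix (Fin n) (Fin n) K |
        ∃ a : Fin m → Matrix (Fin n) (Fin n) K, X = mlEval α a} =
      {X : Matrix (Fin n) (Fin n) K |
        ∃ b : Fin m → Matrix (Fin n) (Fin n) K, X = mlEval β b} := by
    ext X
    constructor
    · rintro ⟨a, rfl⟩
      refine ⟨fun j => a (ρ⁻¹ j), ?_⟩
      rw [hβ, ← mlEval_comp α ρ (fun j => a (ρ⁻¹ j))]
      congr 1
      funext j
      exact congrArg a (ρ.symm_apply_apply j).symm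
    · rintro ⟨b, rfl⟩
      exact ⟨fun j => b (ρ j), (mlEval_comp α ρ b).symm⟩
  rw [hsets]
  exact main_aux hn hm hbound β hβ1 D hD
end

section
/- Let f be a multilinear polynomial over a field K and A a K-algebra. Then the K-linear span of the image f(A) is a Lie ideal of A, i.e., [span(f(A)), A] ⊆ span(f(A)). -/
lemma ofFn_comm {A : Type*} [Ring A] (y : A) :
    ∀ (m : ℕ) (g : Fin m → A),
    (List.ofFn g).prod * y - y * (List.ofFn g).prod =
      ∑ j : Fin m, (List.ofFn (Function.update g j (g j * y - y * g j))).prod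
  | 0, g => by simp
  | (m+1), g => by
    rw [Fin.sum_univ_succ]
    have h0 : Function.update g 0 (g 0 * y - y * g 0) ∘ Fin.succ = g ∘ Fin.succ :=
      Function.update_comp_eq_of_forall_ne _ _ (fun x => Fin.succ_ne_zero x)
    have hsucc : ∀ (j : Fin m) (c : A),
        Function.update g j.succ c ∘ Fin.succ = Function.update (g ∘ Fin.succ) j c := by
      intro j c
      exact Function.update_comp_eq_of_injective _ (Fin.succ_injective m) j c
    have hcons : ∀ h : Fin (m+1) → A, List.ofFn h = h 0 :: List.ofFn (h ∘ Fin.succ) := by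
      intro h; exact List.ofFn_succ
    rw [hcons g, hcons (Function.update g 0 _)]
    simp only [Function.update_self, h0]
    have hrec := ofFn_comm y m (g ∘ Fin.succ)
    have : ∀ j : Fin m,
        List.ofFn (Function.update g j.succ (g j.succ * y - y * g j.succ)) =
          g 0 :: List.ofFn (Function.update (g ∘ Fin.succ) j ((g ∘ Fin.succ) j * y - y * (g ∘ Fin.succ) j)) := by
      intro j
      rw [hcons (Function.update g j.succ _), Function.update_of_ne (Fin.succ_ne_zero j).symm, hsucc]
      rfl
    simp only [this, List.prod_cons]
    rw [← Finset.mul_sum, ← hrec]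
    noncomm_ring

lemma mlEval_comm {K : Type*} [Field K] {A : Type*} [Ring A] [Algebra K A] {m : ℕ}
    (α : Equiv.Perm (Fin m) → K) (a : Fin m → A) (y : A) :
    mlEval α a * y - y * mlEval α a =
      ∑ i : Fin m, mlEval α (Function.update a i (a i * y - y * a i)) := by
  unfold mlEval
  rw [Finset.sum_mul, Finset.mul_sum, ← Finset.sum_sub_distrib, Finset.sum_comm]
  refine Finset.sum_congr rfl ?_
  intro σ _
  rw [smul_mul_assoc, mul_smul_comm, ← smul_sub, ofFn_comm, Finset.smul_sum,
    ← Equiv.sum_comp σ (fun i => α σ • (List.ofFn fun k => Function.update a i (a i * y - y * a i) (σ k)).prod)]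
  refine Finset.sum_congr rfl ?_
  intro j _
  congr 1
  have : (fun k => Function.update a (σ j) (a (σ j) * y - y * a (σ j)) (σ k)) =
      Function.update (fun k => a (σ k)) j (a (σ j) * y - y * a (σ j)) :=
    Function.update_comp_eq_of_injective' _ σ.injective j _
  rw [this]

theorem stmt_11 (K : Type*) [Field K] (A : Type*) [Ring A] [Algebra K A]
    (m : ℕ) (α : Equiv.Perm (Fin m) → K) (v : A)
    (hv : v ∈ Submodule.span K {w : A | ∃ a : Fin m → A, w = mlEval α a}) (y : A) :
    v * y - y * v ∈ Submodule.span K {w : A | ∃ a : Fin m → A, w = mlEval α a} := by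
  induction hv using Submodule.span_induction with
  | mem w hw =>
      obtain ⟨a, rfl⟩ := hw
      rw [mlEval_comm]
      exact Submodule.sum_mem _ fun i _ =>
        Submodule.subset_span ⟨_, rfl⟩
  | zero => simp
  | add x z _ _ hx hz =>
      have : (x + z) * y - y * (x + z) = (x * y - y * x) + (z * y - y * z) := by noncomm_ring
      rw [this]; exact Submodule.add_mem _ hx hz
  | smul c x _ hx =>
      have : (c • x) * y - y * (c • x) = c • (x * y - y * x) := by
        rw [smul_mul_assoc, mul_smul_comm, smul_sub]
      rw [this]; exact Submodule.smul_mem _ c hx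
end

section
/- If f(x₁,…,x_m) is a nonzero multilinear polynomial of degree m = 2n-1 over a field K, then g(x₁,…,x_{m+1}) = [f(x₁,…,x_m), x_{m+1}] is not a polynomial identity of M_n(K). -/
open Matrix

/-- Product of a nonempty list of standard basis matrices. -/
lemma prod_stdBasis {K : Type*} [Field K] {n : ℕ} :
    ∀ (a : Fin n × Fin n) (l : List (Fin n × Fin n)),
    ((a :: l).map fun p => Matrix.single p.1 p.2 (1 : K)).prod =
      if (a :: l).IsChain (fun p q => p.2 = q.1) then
        Matrix.single a.1 ((a :: l).getLast (by simp)).2 1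
      else 0
  | a, [] => by simp
  | a, b :: l => by
      rw [List.map_cons, List.prod_cons, prod_stdBasis b l]
      have hlast : ((a :: b :: l).getLast (by simp)) = ((b :: l).getLast (by simp)) :=
        List.getLast_cons (by simp)
      rw [hlast]
      by_cases hc2 : (a :: b :: l).IsChain (fun p q => p.2 = q.1)
      · obtain ⟨h, hc⟩ := List.isChain_cons_cons.mp hc2
        rw [if_pos hc, if_pos hc2, h, Matrix.single_mul_single_same, one_mul]
      · rw [if_neg hc2]
        by_cases hc : (b :: l).IsChain (fun p q => p.2 = q.1)
        · have h : a.2 ≠ b.1 := fun hh => hc2 (List.isChain_cons_cons.mpr ⟨hh, hc⟩)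
          rw [if_pos hc]
          exact Matrix.single_mul_single_of_ne (1 : K) a.1 a.2 b.1 h 1
        · rw [if_neg hc, mul_zero]

lemma prod_stdBasis' {K : Type*} [Field K] {n : ℕ}
    (l : List (Fin n × Fin n)) (hl : l ≠ []) :
    (l.map fun p => Matrix.single p.1 p.2 (1 : K)).prod =
      if l.IsChain (fun p q => p.2 = q.1) then
        Matrix.single (l.head hl).1 (l.getLast hl).2 1
      else 0 := by
  obtain ⟨a, l, rfl⟩ := List.exists_cons_of_ne_nil hl
  simpa using prod_stdBasis a l

/-- A permutation of `Fin (2n-1)` compatible with the staircase chain is the identity. -/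
lemma perm_eq_one_s13 {n : ℕ} (hn : 2 ≤ n) (τ : Equiv.Perm (Fin (2 * n - 1)))
    (h : ∀ i j : Fin (2 * n - 1), (i : ℕ) + 1 = (j : ℕ) →
      ((τ i : ℕ) + 1) / 2 = (τ j : ℕ) / 2) : τ = 1 := by
  have step : ∀ i j : Fin (2 * n - 1), (i : ℕ) + 1 = (j : ℕ) → τ i < τ j := by
    intro i j hij
    have h1 := h i j hij
    have hne : (τ i : ℕ) ≠ (τ j : ℕ) := by
      intro hh
      have : i = j := τ.injective (Fin.val_injective hh)
      omega
    rw [Fin.lt_def]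
    omega
  have main : ∀ k (a b : Fin (2 * n - 1)), (a : ℕ) + k + 1 = (b : ℕ) → τ a < τ b := by
    intro k
    induction k with
    | zero => exact fun a b hab => step a b (by omega)
    | succ k ih =>
      intro a b hab
      have hb' : (a : ℕ) + k + 1 < 2 * n - 1 := by have := b.isLt; omega
      exact lt_trans (ih a ⟨(a : ℕ) + k + 1, hb'⟩ rfl)
        (step ⟨(a : ℕ) + k + 1, hb'⟩ b (by simp; omega))
  have hsm : StrictMono τ := by
    intro a b hab
    rw [Fin.lt_def] at hab
    exact main ((b : ℕ) - (a : ℕ) - 1) a b (by omega)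
  have h2 : StrictMono.orderIsoOfSurjective τ hsm τ.surjective = OrderIso.refl _ :=
    Subsingleton.elim _ _
  ext i
  have h3 : τ i = i := by
    calc τ i = (StrictMono.orderIsoOfSurjective τ hsm τ.surjective) i := rfl
    _ = i := by rw [h2]; rfl
  simp [h3]

theorem stmt_13 (K : Type*) [Field K] (n m : ℕ) (hn : 2 ≤ n) (hm : m = 2 * n - 1)
    (α : Equiv.Perm (Fin m) → K) (hα : α ≠ 0) :
    ∃ (a : Fin m → Matrix (Fin n) (Fin n) K) (b : Matrix (Fin n) (Fin n) K),
      mlEval α a * b - b * mlEval α a ≠ 0 := by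
  subst hm
  obtain ⟨σ₀, hσ₀⟩ := Function.ne_iff.mp hα
  have hlt1 : ∀ i : Fin (2 * n - 1), (i : ℕ) / 2 < n := fun i => by
    have := i.isLt; omega
  have hlt2 : ∀ i : Fin (2 * n - 1), ((i : ℕ) + 1) / 2 < n := fun i => by
    have := i.isLt; omega
  -- the staircase units
  set pr : Fin (2 * n - 1) → Fin n × Fin n :=
    fun i => (⟨(i : ℕ) / 2, hlt1 i⟩, ⟨((i : ℕ) + 1) / 2, hlt2 i⟩) with hpr
  set u : Fin (2 * n - 1) → Matrix (Fin n) (Fin n) K :=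
    fun i => Matrix.single (pr i).1 (pr i).2 1 with hu
  have hm0 : 0 < 2 * n - 1 := by omega
  have key : ∀ τ : Equiv.Perm (Fin (2 * n - 1)),
      (List.ofFn fun i => u (τ i)).prod =
        if τ = 1 then Matrix.single ⟨0, by omega⟩ ⟨n - 1, by omega⟩ (1 : K) else 0 := by
    intro τ
    have hne : (List.ofFn fun i => pr (τ i)) ≠ [] := by
      simp [List.ofFn_eq_nil_iff]; omega
    have hlist : (List.ofFn fun i => u (τ i)) =
        (List.ofFn fun i => pr (τ i)).map (fun p => Matrix.single p.1 p.2 (1 : K)) := by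
      rw [List.map_ofFn]; rfl
    rw [hlist, prod_stdBasis' _ hne]
    by_cases hτ : τ = 1
    · subst hτ
      have hchain : (List.ofFn fun i => pr ((1 : Equiv.Perm (Fin (2 * n - 1))) i)).IsChain
          (fun p q => p.2 = q.1) := by
        rw [List.isChain_ofFn]
        intro i hi
        exact Fin.ext rfl
      rw [if_pos hchain, if_pos rfl, List.head_ofFn, List.getLast_ofFn]
      have e1 : (pr ((1 : Equiv.Perm (Fin (2 * n - 1)))
          ⟨0, by simpa using hm0⟩)).1 = (⟨0, by omega⟩ : Fin n) := Fin.ext (by simp [hpr])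
      have e2 : (pr ((1 : Equiv.Perm (Fin (2 * n - 1)))
          ⟨2 * n - 1 - 1, by omega⟩)).2 = (⟨n - 1, by omega⟩ : Fin n) := by
        apply Fin.ext
        simp [hpr]
        omega
      rw [e1, e2]
    · have hchain : ¬ (List.ofFn fun i => pr (τ i)).IsChain (fun p q => p.2 = q.1) := by
        intro hc
        rw [List.isChain_ofFn] at hc
        apply hτ
        apply perm_eq_one_s13 hn
        intro i j hij
        have hi : (i : ℕ) + 1 < 2 * n - 1 := by have := j.isLt; omega
        have := hc i hi
        have hieq : (⟨(i : ℕ), Nat.lt_of_succ_lt hi⟩ : Fin (2 * n - 1)) = i := Fin.ext rfl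
        have hjeq : (⟨(i : ℕ) + 1, hi⟩ : Fin (2 * n - 1)) = j := Fin.ext hij
        rw [hieq, hjeq] at this
        exact congrArg Fin.val this
      rw [if_neg hchain, if_neg hτ]
  -- the substitution
  refine ⟨fun i => u (σ₀⁻¹ i), Matrix.single ⟨n - 1, by omega⟩ ⟨n - 1, by omega⟩ 1, ?_⟩
  have heval : mlEval α (fun i => u (σ₀⁻¹ i)) =
      α σ₀ • Matrix.single ⟨0, by omega⟩ ⟨n - 1, by omega⟩ (1 : K) := by
    rw [mlEval]
    rw [Finset.sum_eq_single_of_mem σ₀ (Finset.mem_univ _)]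
    · have : (List.ofFn fun i => u (σ₀⁻¹ (σ₀ i))).prod =
          if (σ₀⁻¹ * σ₀ : Equiv.Perm (Fin (2 * n - 1))) = 1 then
            Matrix.single ⟨0, by omega⟩ ⟨n - 1, by omega⟩ (1 : K) else 0 := key (σ₀⁻¹ * σ₀)
      rw [this, if_pos (inv_mul_cancel σ₀)]
    · intro σ _ hσ
      have : (List.ofFn fun i => u (σ₀⁻¹ (σ i))).prod =
          if (σ₀⁻¹ * σ : Equiv.Perm (Fin (2 * n - 1))) = 1 then
            Matrix.single ⟨0, by omega⟩ ⟨n - 1, by omega⟩ (1 : K) else 0 := key (σ₀⁻¹ * σ)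
      rw [this, if_neg (by
        intro hh
        exact hσ (by rwa [inv_mul_eq_one, eq_comm] at hh)), smul_zero]
  rw [heval]
  have hne01 : (⟨n - 1, by omega⟩ : Fin n) ≠ ⟨0, by omega⟩ := by
    intro hh
    have := congrArg Fin.val hh
    simp at this
    omega
  rw [smul_mul_assoc, mul_smul_comm, Matrix.single_mul_single_same,
    Matrix.single_mul_single_of_ne (h := hne01), smul_zero, sub_zero, one_mul]
  intro hh
  have := congrFun (congrFun hh ⟨0, by omega⟩) ⟨n - 1, by omega⟩
  rw [Matrix.smul_apply, Matrix.single_apply_same, smul_eq_mul, mul_one] at this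
  exact hσ₀ this
end

section
/- Let K be a field of characteristic zero, n ≥ 3, and let d₁₂, d₂₃, …, d_{n-1,n} ∈ K and λ ∈ K with λ ≠ -1. Then there exist diagonal matrices of the form P = Σ a_i e_{i,i} and Q = Σ b_{i,i+1} e_{i,i+1} (strictly upper bidiagonal) with Σ a_i = 0 such that PQ + λQP = Σ_{i=1}^{n-1} d_{i,i+1} e_{i,i+1}. Explicitly, one needs scalars a₁,…,a_n with Σ a_i = 0 and a_i + λ a_{i+1} ≠ 0 for all 1 ≤ i ≤ n-1. -/
open Matrix

/-- The strictly upper bidiagonal matrix with superdiagonal entries `b i` in row `i`. -/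
def superDiag {K : Type*} [Field K] {n : ℕ} (b : Fin n → K) : Matrix (Fin n) (Fin n) K :=
  Matrix.of fun i j => if (j : ℕ) = (i : ℕ) + 1 then b i else 0

lemma exists_b {K : Type*} [Field K] {n : ℕ} (a : Fin n → K) (d : Fin n → Fin n → K)
    (lam : K) (ha : ∀ i j : Fin n, (j : ℕ) = (i : ℕ) + 1 → a i + lam * a j ≠ 0) :
    ∃ b : Fin n → K,
      Matrix.diagonal a * superDiag b + lam • (superDiag b * Matrix.diagonal a) =
        Matrix.of fun (i j : Fin n) => if (j : ℕ) = (i : ℕ) + 1 then d i j else 0 := by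
  refine ⟨fun i => if h : (i : ℕ) + 1 < n then
      d i ⟨(i : ℕ) + 1, h⟩ / (a i + lam * a ⟨(i : ℕ) + 1, h⟩) else 0, ?_⟩
  ext i j
  simp only [Matrix.add_apply, Matrix.smul_apply, Matrix.diagonal_mul, Matrix.mul_diagonal,
    superDiag, Matrix.of_apply, smul_eq_mul]
  by_cases h : (j : ℕ) = (i : ℕ) + 1
  · simp only [h, if_true]
    have hj : (i : ℕ) + 1 < n := h ▸ j.isLt
    have hje : j = ⟨(i : ℕ) + 1, hj⟩ := Fin.ext h
    rw [dif_pos hj, ← hje]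
    have hne := ha i j h
    field_simp
  · simp [h]

lemma exists_a (K : Type*) [Field K] [CharZero K] (n : ℕ) (hn : 3 ≤ n)
    (lam : K) (hlam : lam ≠ -1) :
    ∃ a : Fin n → K, (∑ i, a i = 0) ∧
      (∀ i j : Fin n, (j : ℕ) = (i : ℕ) + 1 → a i + lam * a j ≠ 0) := by
  have h1l : (1 : K) + lam ≠ 0 := by intro h; apply hlam; linear_combination h
  by_cases hc : ((n : K) - 1) * lam = 1
  · -- lam = 1/(n-1); a = (1,...,1,0,-(n-2))
    have hlam0 : lam ≠ 0 := fun h => by simp [h] at hc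
    refine ⟨fun i => 1 + (if i = (⟨n - 1, by omega⟩ : Fin n) then -((n : K) - 1) else 0)
      + (if (i : ℕ) = n - 2 then -1 else 0), ?_, ?_⟩
    · have : ∀ i : Fin n, ((i : ℕ) = n - 2) = (i = (⟨n - 2, by omega⟩ : Fin n)) := by
        intro i; rw [Fin.ext_iff]
      simp only [this]
      rw [Finset.sum_add_distrib, Finset.sum_add_distrib, Finset.sum_const,
        Finset.sum_ite_eq' Finset.univ, Finset.sum_ite_eq' Finset.univ]
      simp only [Finset.mem_univ, if_true, Finset.card_univ, Fintype.card_fin, nsmul_eq_mul,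
        mul_one]
      ring
    · intro i j hij
      have hi : (i : ℕ) < n - 1 := by have := j.isLt; omega
      have hine : i ≠ (⟨n - 1, by omega⟩ : Fin n) := by
        intro h; rw [Fin.ext_iff] at h; simp at h; omega
      simp only [if_neg hine]
      by_cases hj2 : (j : ℕ) = n - 2
      · have hi2 : (i : ℕ) ≠ n - 2 := by omega
        have hjne : j ≠ (⟨n - 1, by omega⟩ : Fin n) := by
          intro h; rw [Fin.ext_iff] at h; simp at h; omega
        simp only [if_neg hi2, if_neg hjne, if_pos hj2]
        intro h; norm_num at h
      · by_cases hi2 : (i : ℕ) = n - 2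
        · have hje : j = (⟨n - 1, by omega⟩ : Fin n) := by
            rw [Fin.ext_iff]; simp; omega
          simp only [if_pos hi2, if_pos hje, if_neg hj2]
          have hn2 : (n : K) - 2 ≠ 0 := by
            intro h
            have h2 : (n : K) = 2 := by linear_combination h
            have : n = 2 := by exact_mod_cast h2
            omega
          intro h
          have : lam * ((n : K) - 2) = 0 := by linear_combination -h
          rcases mul_eq_zero.mp this with h' | h'
          · exact hlam0 h'
          · exact hn2 h'
        · have hjne : j ≠ (⟨n - 1, by omega⟩ : Fin n) := by
            intro h; rw [Fin.ext_iff] at h; simp at h; omega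
          simp only [if_neg hi2, if_neg hjne, if_neg hj2]
          intro h; exact h1l (by linear_combination h)
  · -- generic case: a = (1,...,1,-(n-1))
    refine ⟨fun i => 1 + (if i = (⟨n - 1, by omega⟩ : Fin n) then -(n : K) else 0), ?_, ?_⟩
    · rw [Finset.sum_add_distrib, Finset.sum_const, Finset.sum_ite_eq' Finset.univ]
      simp
    · intro i j hij
      have hi : (i : ℕ) < n - 1 := by have := j.isLt; omega
      have hine : i ≠ (⟨n - 1, by omega⟩ : Fin n) := by
        intro h; rw [Fin.ext_iff] at h; simp at h; omega
      simp only [if_neg hine]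
      by_cases hje : j = (⟨n - 1, by omega⟩ : Fin n)
      · simp only [if_pos hje]
        intro h
        exact hc (by linear_combination -h)
      · simp only [if_neg hje]
        intro h; exact h1l (by linear_combination h)

theorem stmt_14 (K : Type*) [Field K] [CharZero K] (n : ℕ) (hn : 3 ≤ n)
    (d : Fin n → Fin n → K) (lam : K) (hlam : lam ≠ -1) :
    ∃ a b : Fin n → K,
      (∑ i, a i = 0) ∧
      (∀ i j : Fin n, (j : ℕ) = (i : ℕ) + 1 → a i + lam * a j ≠ 0) ∧
      Matrix.diagonal a * superDiag b + lam • (superDiag b * Matrix.diagonal a) =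
        Matrix.of fun (i j : Fin n) => if (j : ℕ) = (i : ℕ) + 1 then d i j else 0 := by
  obtain ⟨a, hsum, ha⟩ := exists_a K n hn lam hlam
  obtain ⟨b, hb⟩ := exists_b a d lam ha
  exact ⟨a, b, hsum, ha, hb⟩
end

section
/- Let K be a field, n ≥ 2, m ≥ 2 integers with n ≥ (m+1)/2, let i ≠ j in {1,…,n}, and let f(x₁,…,x_m) = Σ_{σ ∈ S_m} α_σ x_{σ(1)}⋯x_{σ(m)} with α_id ≠ 0. Then there exist matrix units E₁,…,E_m ∈ M_n(K) such that f(E₁,…,E_m) = α_id · e_{i,j}. -/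
open Matrix

/-! Take the matrix units along a walk `q 0 → q 1 → ⋯ → q m` that visits the distinct vertices
`i = v 0, v 1, …, v d = j` of a path twice each, alternating a loop `e_{v_k v_k}` with the step
`e_{v_k v_{k+1}}`. A product of matrix units is nonzero only if consecutive units chain head to
tail, and the loops force every such ordering to go strictly forward along the walk; hence only
the identity monomial survives, and it evaluates to `e_{ij}`. The bound `m + 1 ≤ 2n` is exactly
what leaves room for the `m / 2 + 1` vertices. -/

theorem Equiv.exists_perm_apply_eq_apply_eq {α : Type*} [DecidableEq α] {a b i j : α}
    (hab : a ≠ b) (hij : i ≠ j) : ∃ π : Equiv.Perm α, π a = i ∧ π b = j := by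
  set b' := swap a i b
  have hb' : b' ≠ i := fun h =>
    hab ((swap a i).injective (h.trans (swap_apply_left a i).symm)).symm
  exact ⟨(swap a i).trans (swap b' j), by simp [swap_apply_of_ne_of_ne hb'.symm hij], by simp [b']⟩

theorem Fintype.exists_injective_fin_zero_last {α : Type*} [Fintype α] [DecidableEq α] {i j : α}
    (hij : i ≠ j) {k : ℕ} (hk : 0 < k) (hkα : k + 1 ≤ Fintype.card α) :
    ∃ v : Fin (k + 1) → α, Function.Injective v ∧ v 0 = i ∧ v (Fin.last k) = j := by
  let e : Fin (k + 1) ↪ α := (Fin.castLEEmb hkα).trans (Fintype.equivFin α).symm.toEmbedding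
  have he : e 0 ≠ e (Fin.last k) := e.injective.ne (Fin.ne_of_val_ne (by simpa using hk.ne))
  obtain ⟨π, hπi, hπj⟩ := Equiv.exists_perm_apply_eq_apply_eq he hij
  exact ⟨π ∘ e, π.injective.comp e.injective, hπi, hπj⟩

theorem List.prod_ofFn_single {ι R : Type*} [Fintype ι] [DecidableEq ι] [Semiring R] :
    ∀ {m : ℕ} (a b : Fin (m + 1) → ι),
      (List.ofFn fun t => single (a t) (b t) (1 : R)).prod =
        if ∀ t : Fin m, b t.castSucc = a t.succ then single (a 0) (b (Fin.last m)) 1 else 0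
  | 0, a, b => by simp
  | m + 1, a, b => by
    rw [List.ofFn_succ, List.prod_cons,
      List.prod_ofFn_single (fun t => a t.succ) (fun t => b t.succ)]
    simp only [Fin.forall_fin_succ, Fin.succ_castSucc, Fin.castSucc_zero, Fin.succ_zero_eq_one,
      Fin.succ_last]
    by_cases h0 : b 0 = a 1 <;> simp [h0]

section Walk

variable {ι : Type*} {m : ℕ}

/-- The units `e_{q t, q (t+1)}` of the walk `q`, multiplied in the order `σ`, chain head to
tail. -/
def IsChainOrder (q : Fin (m + 2) → ι) (σ : Equiv.Perm (Fin (m + 1))) : Prop :=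
  ∀ t : Fin m, q (σ t.castSucc).succ = q (σ t.succ).castSucc

theorem isChainOrder_one (q : Fin (m + 2) → ι) : IsChainOrder q 1 :=
  fun t => congrArg q (Fin.succ_castSucc t)

theorem IsChainOrder.eq_one {q : Fin (m + 2) → ι}
    (hq : ∀ s t, q s = q t → (s : ℕ) / 2 = (t : ℕ) / 2) {σ : Equiv.Perm (Fin (m + 1))}
    (hσ : IsChainOrder q σ) : σ = 1 := by
  refine (Equiv.Perm.monotone_iff σ).1 (Fin.monotone_iff_le_succ.2 fun t => ?_)
  have h := hq _ _ (hσ t)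
  simp only [Fin.val_succ, Fin.val_castSucc] at h
  rw [Fin.le_iff_val_le_val]
  omega

theorem mlEval_single_walk {K : Type*} [Field K] [Fintype ι] [DecidableEq ι]
    (q : Fin (m + 2) → ι) (α : Equiv.Perm (Fin (m + 1)) → K)
    (hq : ∀ σ, IsChainOrder q σ → σ = 1) :
    mlEval α (fun t => single (q t.castSucc) (q t.succ) (1 : K)) =
      α 1 • single (q 0) (q (Fin.last _)) 1 := by
  unfold mlEval
  rw [Fintype.sum_eq_single 1]
  · simp only [Equiv.Perm.one_apply]
    rw [List.prod_ofFn_single (fun t => q t.castSucc) (fun t => q t.succ), if_pos]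
    · rfl
    · exact isChainOrder_one q
  · intro σ hσ
    beta_reduce
    rw [List.prod_ofFn_single (fun t => q (σ t).castSucc) (fun t => q (σ t).succ),
      if_neg, smul_zero]
    exact hσ ∘ hq σ

end Walk

theorem stmt_16_general (K : Type*) [Field K] (n m : ℕ) (hm : 2 ≤ m)
    (hbound : m + 1 ≤ 2 * n) (i j : Fin n) (hij : i ≠ j)
    (α : Equiv.Perm (Fin m) → K) :
    ∃ E : Fin m → Matrix (Fin n) (Fin n) K,
      (∀ k : Fin m, ∃ p q : Fin n, E k = Matrix.single p q (1 : K)) ∧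
      mlEval α E = α 1 • Matrix.single i j (1 : K) := by
  obtain ⟨m, rfl⟩ : ∃ m', m = m' + 1 := ⟨m - 1, by omega⟩
  obtain ⟨v, hv, hv0, hvl⟩ := Fintype.exists_injective_fin_zero_last hij
    (k := (m + 1) / 2) (by omega) (by rw [Fintype.card_fin]; omega)
  let q : Fin (m + 2) → Fin n := fun t => v ⟨t / 2, by omega⟩
  have hq : ∀ s t, q s = q t → (s : ℕ) / 2 = (t : ℕ) / 2 := fun s t h => congrArg Fin.val (hv h)
  refine ⟨fun t => single (q t.castSucc) (q t.succ) 1, fun t => ⟨_, _, rfl⟩, ?_⟩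
  rw [mlEval_single_walk q α fun σ => IsChainOrder.eq_one hq,
    show q 0 = v 0 from congrArg v (Fin.ext (by simp)),
    show q (Fin.last _) = v (Fin.last _) from congrArg v (Fin.ext (by simp)), hv0, hvl]

theorem stmt_16 (K : Type*) [Field K] (n m : ℕ) (hn : 2 ≤ n) (hm : 2 ≤ m)
    (hbound : m + 1 ≤ 2 * n) (i j : Fin n) (hij : i ≠ j)
    (α : Equiv.Perm (Fin m) → K) (hα : α 1 ≠ 0) :
    ∃ E : Fin m → Matrix (Fin n) (Fin n) K,
      (∀ k : Fin m, ∃ p q : Fin n, E k = Matrix.single p q (1 : K)) ∧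
      mlEval α E = α 1 • Matrix.single i j (1 : K) :=
  stmt_16_general K n m hm hbound i j hij α
end
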